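/- arXiv:0709.4467 — 5 statements merged into one kernel-verified Lean document; each statement's English description precedes it below -/
import Mathlib

section
/- Necessity part of the Lagrange method: if Problem (P_a) (for some a>0) admits an optimal solution X* whose objective value E[u(X*)] is finite, then there exists λ>0 such that X* = I(λξ) almost surely. -/
open MeasureTheory Filter Set
open scoped ENNReal

noncomputable def Vval {Ω : Type*} [MeasurableSpace Ω] (P : Measure Ω)
    (ξ : Ω → ℝ) (u : ℝ → ℝ) (a : ℝ) : ℝ≥0∞ :=
  ⨆ (X : Ω → ℝ) (_ : Measurable X) (_ : ∀ᵐ ω ∂P, 0 ≤ X ω)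
    (_ : ∫⁻ ω, ENNReal.ofReal (X ω * ξ ω) ∂P = ENNReal.ofReal a),
    ∫⁻ ω, ENNReal.ofReal (u (X ω)) ∂P

/-- `X` is an optimal solution of Problem (P_a): it is feasible (measurable,
nonnegative a.s., satisfying the budget constraint `E[Xξ] = a`) and its expected
utility dominates that of every feasible solution. -/
def IsOptimal {Ω : Type*} [MeasurableSpace Ω] (P : Measure Ω)
    (ξ : Ω → ℝ) (u : ℝ → ℝ) (a : ℝ) (X : Ω → ℝ) : Prop :=
  Measurable X ∧ (∀ᵐ ω ∂P, 0 ≤ X ω) ∧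
    (∫⁻ ω, ENNReal.ofReal (X ω * ξ ω) ∂P = ENNReal.ofReal a) ∧
    ∀ Y : Ω → ℝ, Measurable Y → (∀ᵐ ω ∂P, 0 ≤ Y ω) →
      (∫⁻ ω, ENNReal.ofReal (Y ω * ξ ω) ∂P = ENNReal.ofReal a) →
      ∫⁻ ω, ENNReal.ofReal (u (Y ω)) ∂P ≤ ∫⁻ ω, ENNReal.ofReal (u (X ω)) ∂P

/-- `fLag P ξ I lam = E[I(λξ)ξ]`, the function whose equation `f(λ) = a`
determines the Lagrange multiplier. -/
noncomputable def fLag {Ω : Type*} [MeasurableSpace Ω] (P : Measure Ω)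
    (ξ : Ω → ℝ) (I : ℝ → ℝ) (lam : ℝ) : ℝ≥0∞ :=
  ∫⁻ ω, ENNReal.ofReal (I (lam * ξ ω) * ξ ω) ∂P

open scoped Topology

/-!
If `X` is optimal, the marginal utility per unit of price `u'(X) / ξ` must be a.s. constant:
otherwise it is `≥ d` on a set `A` and `≤ c < d` on a set `B`, both of positive probability, and
moving budget from `B` to `A` (buying `ε / ξ` more on `A`, `δ / ξ` less on `B`, with
`ε P(A) = δ P(B)`) keeps the claim feasible while, by concavity of `u`, it gains at least
`d ε P(A)` and loses at most `c δ P(B)`, contradicting optimality. The same exchange, fed by the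
Inada condition `u'(0+) = ∞`, first shows `X > 0` a.s. Then `u'(X) = λ ξ` inverts to
`X = I(λ ξ)`.
-/

section Concave

variable {S : Set ℝ} {f g : ℝ → ℝ} {x y f' : ℝ}

theorem ConcaveOn.mul_sub_le_sub_of_hasDerivAt (hf : ConcaveOn ℝ S f) (hx : x ∈ S) (hy : y ∈ S)
    (hxy : x < y) (hf' : HasDerivAt f f' y) : f' * (y - x) ≤ f y - f x := by
  have := hf.le_slope_of_hasDerivAt hx hy hxy hf'
  rwa [slope_def_field, le_div_iff₀ (sub_pos.2 hxy)] at this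

theorem ConcaveOn.sub_le_mul_sub_of_hasDerivAt (hf : ConcaveOn ℝ S f) (hx : x ∈ S) (hy : y ∈ S)
    (hxy : x < y) (hf' : HasDerivAt f f' x) : f y - f x ≤ f' * (y - x) := by
  have := hf.slope_le_of_hasDerivAt hx hy hxy hf'
  rwa [slope_def_field, div_le_iff₀ (sub_pos.2 hxy)] at this

theorem ConcaveOn.antitoneOn_of_hasDerivAt (hf : ConcaveOn ℝ S f)
    (hg : ∀ x ∈ S, HasDerivAt f (g x) x) : AntitoneOn g S := by
  intro x hx y hy hxy
  rcases hxy.eq_or_lt with rfl | hxy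
  · rfl
  · exact (hf.le_slope_of_hasDerivAt hx hy hxy (hg y hy)).trans
      (hf.slope_le_of_hasDerivAt hx hy hxy (hg x hx))

end Concave

theorem exists_measure_inter_setOf_ne_zero {Ω : Type*} [MeasurableSpace Ω] {μ : Measure Ω}
    {S : Set Ω} (hS : μ S ≠ 0) {p : ℕ → Ω → Prop} (hp : ∀ᵐ ω ∂μ, ω ∈ S → ∃ n, p n ω) :
    ∃ n, μ (S ∩ {ω | p n ω}) ≠ 0 := by
  by_contra! h
  refine hS (measure_mono_null_ae ?_ (measure_iUnion_null h))
  filter_upwards [hp] with ω hω hωS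
  obtain ⟨n, hn⟩ := hω hωS
  exact mem_iUnion.2 ⟨n, hωS, hn⟩

section Transfer

variable {Ω : Type*} {ξ X : Ω → ℝ} {A B : Set Ω} {ε δ : ℝ} {ω : Ω}

/-- `X` with budget moved from the states of `B` to those of `A`: its cost `E[· ξ]` rises by
`ε P(A)` and falls by `δ P(B)`. -/
noncomputable def transferWealth (X ξ : Ω → ℝ) (A B : Set Ω) (ε δ : ℝ) (ω : Ω) : ℝ :=
  X ω + A.indicator (fun ω => ε / ξ ω) ω - B.indicator (fun ω => δ / ξ ω) ω

theorem transferWealth_of_mem_left (hAB : Disjoint A B) (hω : ω ∈ A) :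
    transferWealth X ξ A B ε δ ω = X ω + ε / ξ ω := by
  simp [transferWealth, hω, hAB.notMem_of_mem_left hω]

theorem transferWealth_of_mem_right (hAB : Disjoint A B) (hω : ω ∈ B) :
    transferWealth X ξ A B ε δ ω = X ω - δ / ξ ω := by
  simp [transferWealth, hω, hAB.notMem_of_mem_right hω]

theorem transferWealth_of_notMem (hωA : ω ∉ A) (hωB : ω ∉ B) :
    transferWealth X ξ A B ε δ ω = X ω := by
  simp [transferWealth, hωA, hωB]

theorem transferWealth_nonneg (hAB : Disjoint A B) (hε : 0 ≤ ε) (hA' : ∀ ω ∈ A, 0 < ξ ω)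
    (hB' : ∀ ω ∈ B, δ / ξ ω < X ω) (hX : 0 ≤ X ω) : 0 ≤ transferWealth X ξ A B ε δ ω := by
  by_cases hωA : ω ∈ A
  · rw [transferWealth_of_mem_left hAB hωA]
    have := hA' ω hωA
    positivity
  by_cases hωB : ω ∈ B
  · rw [transferWealth_of_mem_right hAB hωB]
    linarith [hB' ω hωB]
  · rwa [transferWealth_of_notMem hωA hωB]

variable [MeasurableSpace Ω] {P : Measure Ω} {u u' : ℝ → ℝ} {c d : ℝ}

theorem measurable_transferWealth (hX : Measurable X) (hξ : Measurable ξ) (hA : MeasurableSet A)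
    (hB : MeasurableSet B) : Measurable (transferWealth X ξ A B ε δ) :=
  (hX.add ((measurable_const.div hξ).indicator hA)).sub ((measurable_const.div hξ).indicator hB)

theorem lintegral_transferWealth_mul_add (hA : MeasurableSet A) (hB : MeasurableSet B)
    (hAB : Disjoint A B) (hε : 0 ≤ ε) (hδ : 0 ≤ δ) (hA' : ∀ ω ∈ A, 0 < ξ ω ∧ 0 ≤ X ω)
    (hB' : ∀ ω ∈ B, 0 < ξ ω ∧ δ / ξ ω < X ω) :
    ∫⁻ ω, ENNReal.ofReal (transferWealth X ξ A B ε δ ω * ξ ω) ∂P + ENNReal.ofReal δ * P B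
      = ∫⁻ ω, ENNReal.ofReal (X ω * ξ ω) ∂P + ENNReal.ofReal ε * P A := by
  rw [← lintegral_indicator_const hA, ← lintegral_indicator_const hB,
    ← lintegral_add_right _ (measurable_const.indicator hA),
    ← lintegral_add_right _ (measurable_const.indicator hB)]
  refine lintegral_congr fun ω => ?_
  by_cases hωA : ω ∈ A
  · obtain ⟨hξ, hX⟩ := hA' ω hωA
    rw [transferWealth_of_mem_left hAB hωA, indicator_of_mem hωA,
      indicator_of_notMem (hAB.notMem_of_mem_left hωA), add_zero, add_mul,
      div_mul_cancel₀ _ hξ.ne', ENNReal.ofReal_add (by positivity) hε]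
  by_cases hωB : ω ∈ B
  · obtain ⟨hξ, hX⟩ := hB' ω hωB
    have hδX : δ < X ω * ξ ω := (div_lt_iff₀ hξ).1 hX
    rw [transferWealth_of_mem_right hAB hωB, indicator_of_mem hωB, indicator_of_notMem hωA,
      add_zero, sub_mul, div_mul_cancel₀ _ hξ.ne', ← ENNReal.ofReal_add (by linarith) hδ,
      sub_add_cancel]
  · simp [transferWealth_of_notMem hωA hωB, hωA, hωB]

theorem lintegral_utility_add_le_transferWealth
    (hu_nonneg : ∀ x : ℝ, 0 ≤ x → 0 ≤ u x) (hu_conc : ConcaveOn ℝ (Ici 0) u)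
    (hu_deriv : ∀ x : ℝ, 0 < x → HasDerivAt u (u' x) x) (hA : MeasurableSet A)
    (hB : MeasurableSet B) (hAB : Disjoint A B) (hε : 0 < ε) (hδ : 0 < δ) (hd : 0 ≤ d)
    (hA' : ∀ ω ∈ A, 0 < ξ ω ∧ 0 ≤ X ω ∧ d ≤ u' (X ω + ε / ξ ω) / ξ ω)
    (hB' : ∀ ω ∈ B, 0 < ξ ω ∧ δ / ξ ω < X ω ∧ u' (X ω - δ / ξ ω) / ξ ω ≤ c) :
    ∫⁻ ω, ENNReal.ofReal (u (X ω)) ∂P + ENNReal.ofReal (d * ε) * P A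
      ≤ ∫⁻ ω, ENNReal.ofReal (u (transferWealth X ξ A B ε δ ω)) ∂P
        + ENNReal.ofReal (c * δ) * P B := by
  rw [← lintegral_indicator_const hA, ← lintegral_indicator_const hB,
    ← lintegral_add_right _ (measurable_const.indicator hA),
    ← lintegral_add_right _ (measurable_const.indicator hB)]
  refine lintegral_mono fun ω => ?_
  by_cases hωA : ω ∈ A
  · obtain ⟨hξ, hX, hdA⟩ := hA' ω hωA
    have ht : 0 < ε / ξ ω := div_pos hε hξ
    have hgain := hu_conc.mul_sub_le_sub_of_hasDerivAt hX (mem_Ici.2 (by positivity))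
      (lt_add_of_pos_right _ ht) (hu_deriv _ (by positivity))
    have hdε : d * ε ≤ u' (X ω + ε / ξ ω) * (ε / ξ ω) := by
      calc d * ε = d * ξ ω * (ε / ξ ω) := by field_simp
        _ ≤ u' (X ω + ε / ξ ω) * (ε / ξ ω) :=
          mul_le_mul_of_nonneg_right ((le_div_iff₀ hξ).1 hdA) ht.le
    rw [transferWealth_of_mem_left hAB hωA, indicator_of_mem hωA,
      indicator_of_notMem (hAB.notMem_of_mem_left hωA), add_zero,
      ← ENNReal.ofReal_add (hu_nonneg _ hX) (by positivity)]
    exact ENNReal.ofReal_le_ofReal (by linarith)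
  by_cases hωB : ω ∈ B
  · obtain ⟨hξ, hX, hcB⟩ := hB' ω hωB
    have hs : 0 < δ / ξ ω := div_pos hδ hξ
    have hloss := hu_conc.sub_le_mul_sub_of_hasDerivAt (sub_pos.2 hX).le (hs.trans hX).le
      (sub_lt_self _ hs) (hu_deriv _ (sub_pos.2 hX))
    have hcδ : u' (X ω - δ / ξ ω) * (δ / ξ ω) ≤ c * δ := by
      calc u' (X ω - δ / ξ ω) * (δ / ξ ω) = u' (X ω - δ / ξ ω) / ξ ω * δ := by ring
        _ ≤ c * δ := mul_le_mul_of_nonneg_right hcB hδ.le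
    rw [transferWealth_of_mem_right hAB hωB, indicator_of_mem hωB, indicator_of_notMem hωA,
      add_zero]
    refine (ENNReal.ofReal_le_ofReal ?_).trans ENNReal.ofReal_add_le
    rw [sub_sub_cancel] at hloss
    linarith
  · simp [transferWealth_of_notMem hωA hωB, hωA, hωB]

end Transfer

section Optimality

variable {Ω : Type*} [MeasurableSpace Ω] {P : Measure Ω} {ξ X : Ω → ℝ} {u u' : ℝ → ℝ}
  {A B : Set Ω} {a c d ε δ : ℝ}

theorem IsOptimal.le_of_balanced_transfer [IsFiniteMeasure P] (hX : IsOptimal P ξ u a X)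
    (hXfin : ∫⁻ ω, ENNReal.ofReal (u (X ω)) ∂P < ⊤) (hξmeas : Measurable ξ)
    (hu_nonneg : ∀ x : ℝ, 0 ≤ x → 0 ≤ u x) (hu_conc : ConcaveOn ℝ (Ici 0) u)
    (hu_deriv : ∀ x : ℝ, 0 < x → HasDerivAt u (u' x) x) (hA : MeasurableSet A)
    (hB : MeasurableSet B) (hAB : Disjoint A B) (hPA : P A ≠ 0) (hε : 0 < ε) (hδ : 0 < δ)
    (hεδ : ENNReal.ofReal ε * P A = ENNReal.ofReal δ * P B) (hd : 0 < d)
    (hA' : ∀ ω ∈ A, 0 < ξ ω ∧ 0 ≤ X ω ∧ d ≤ u' (X ω + ε / ξ ω) / ξ ω)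
    (hB' : ∀ ω ∈ B, 0 < ξ ω ∧ δ / ξ ω < X ω ∧ u' (X ω - δ / ξ ω) / ξ ω ≤ c) : d ≤ c := by
  obtain ⟨hXmeas, hX0, hbudget, hopt⟩ := hX
  have hcost : ENNReal.ofReal ε * P A ≠ ⊤ := ENNReal.mul_ne_top ENNReal.ofReal_ne_top
    (measure_ne_top P A)
  have hYbudget : ∫⁻ ω, ENNReal.ofReal (transferWealth X ξ A B ε δ ω * ξ ω) ∂P
      = ENNReal.ofReal a := by
    have h := lintegral_transferWealth_mul_add (P := P) hA hB hAB hε.le hδ.le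
      (fun ω hω => ⟨(hA' ω hω).1, (hA' ω hω).2.1⟩) (fun ω hω => ⟨(hB' ω hω).1, (hB' ω hω).2.1⟩)
    rwa [← hεδ, hbudget, ENNReal.add_left_inj hcost] at h
  have hYopt := hopt _ (measurable_transferWealth hXmeas hξmeas hA hB)
    (hX0.mono fun ω => transferWealth_nonneg hAB hε.le (fun ω hω => (hA' ω hω).1)
      (fun ω hω => (hB' ω hω).2.1)) hYbudget
  have hgain := (lintegral_utility_add_le_transferWealth (P := P) hu_nonneg
    hu_conc hu_deriv hA hB hAB hε hδ hd.le hA' hB').trans (add_le_add_left hYopt _)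
  rw [ENNReal.add_le_add_iff_left hXfin.ne, ENNReal.ofReal_mul hd.le,
    ENNReal.ofReal_mul' hδ.le, mul_assoc, mul_assoc, ← hεδ,
    ENNReal.mul_le_mul_iff_left (mul_ne_zero (by simpa using hε) hPA) hcost] at hgain
  exact (ENNReal.ofReal_le_ofReal_iff'.1 hgain).resolve_right hd.not_ge

theorem IsOptimal.le_of_marginal_bounds [IsProbabilityMeasure P] (hX : IsOptimal P ξ u a X)
    (hXfin : ∫⁻ ω, ENNReal.ofReal (u (X ω)) ∂P < ⊤) (hξmeas : Measurable ξ)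
    (hu_nonneg : ∀ x : ℝ, 0 ≤ x → 0 ≤ u x) (hu_conc : ConcaveOn ℝ (Ici 0) u)
    (hu_deriv : ∀ x : ℝ, 0 < x → HasDerivAt u (u' x) x) (hA : MeasurableSet A)
    (hB : MeasurableSet B) (hAB : Disjoint A B) (hPA : P A ≠ 0) (hPB : P B ≠ 0)
    {sA sB : ℝ} (hsA : 0 < sA) (hsB : 0 < sB) (hd : 0 < d)
    (hA' : ∀ ω ∈ A, 0 < ξ ω ∧ 0 ≤ X ω ∧ d ≤ u' (X ω + sA / ξ ω) / ξ ω)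
    (hB' : ∀ ω ∈ B, 0 < ξ ω ∧ sB / ξ ω < X ω ∧ u' (X ω - sB / ξ ω) / ξ ω ≤ c) : d ≤ c := by
  have hanti : AntitoneOn u' (Ioi 0) :=
    (hu_conc.subset Ioi_subset_Ici_self (convex_Ioi 0)).antitoneOn_of_hasDerivAt hu_deriv
  set s := min sA sB
  have hs : 0 < s := lt_min hsA hsB
  have hPA' : 0 < (P A).toReal := ENNReal.toReal_pos hPA (measure_ne_top P A)
  have hPB' : 0 < (P B).toReal := ENNReal.toReal_pos hPB (measure_ne_top P B)
  -- the sizes `s P(B)` and `s P(A)` balance the budget, and being at most `s` they inherit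
  -- the bounds at `sA` and `sB` by monotonicity of `u'`
  have hε : s * (P B).toReal ≤ s := mul_le_of_le_one_right hs.le measureReal_le_one
  have hδ : s * (P A).toReal ≤ s := mul_le_of_le_one_right hs.le measureReal_le_one
  refine hX.le_of_balanced_transfer hXfin hξmeas hu_nonneg hu_conc hu_deriv hA hB hAB hPA
    (mul_pos hs hPB') (mul_pos hs hPA') ?_ hd (fun ω hω => ?_) (fun ω hω => ?_)
  · rw [ENNReal.ofReal_mul hs.le, ENNReal.ofReal_mul hs.le, ENNReal.ofReal_toReal
      (measure_ne_top P A), ENNReal.ofReal_toReal (measure_ne_top P B), mul_right_comm]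
  · obtain ⟨hξ, hX0, hdA⟩ := hA' ω hω
    have hle : s * (P B).toReal / ξ ω ≤ sA / ξ ω :=
      div_le_div_of_nonneg_right (hε.trans (min_le_left _ _)) hξ.le
    refine ⟨hξ, hX0, hdA.trans (div_le_div_of_nonneg_right (hanti ?_ ?_ (by linarith)) hξ.le)⟩
    · exact add_pos_of_nonneg_of_pos hX0 (by positivity)
    · exact add_pos_of_nonneg_of_pos hX0 (by positivity)
  · obtain ⟨hξ, hXs, hcB⟩ := hB' ω hω
    have hle : s * (P A).toReal / ξ ω ≤ sB / ξ ω :=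
      div_le_div_of_nonneg_right (hδ.trans (min_le_right _ _)) hξ.le
    refine ⟨hξ, hle.trans_lt hXs, le_trans (div_le_div_of_nonneg_right ?_ hξ.le) hcB⟩
    exact hanti (sub_pos.2 hXs) (by simp only [mem_Ioi]; linarith) (by linarith)

theorem eventually_one_div_add_one_le {x : ℝ} (hx : 0 < x) :
    ∀ᶠ n : ℕ in atTop, 1 / ((n : ℝ) + 1) ≤ x :=
  tendsto_one_div_add_atTop_nhds_zero_nat.eventually (eventually_le_nhds hx)

theorem IsOptimal.measure_setOf_pos_ne_zero (hX : IsOptimal P ξ u a X)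
    (hξpos : ∀ᵐ ω ∂P, 0 < ξ ω) (ha : 0 < a) : P {ω | 0 < X ω} ≠ 0 := by
  intro h
  have hcost : ∫⁻ ω, ENNReal.ofReal (X ω * ξ ω) ∂P = 0 := by
    refine (lintegral_congr_ae ?_).trans lintegral_zero
    filter_upwards [hξpos, measure_eq_zero_iff_ae_notMem.1 h] with ω hξ hX
    exact ENNReal.ofReal_eq_zero.2 (mul_nonpos_of_nonpos_of_nonneg (not_lt.1 hX) hξ.le)
  rw [hX.2.2.1, ENNReal.ofReal_eq_zero] at hcost
  exact hcost.not_gt ha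

theorem IsOptimal.measure_zero_inter_eq_zero [IsProbabilityMeasure P] (hX : IsOptimal P ξ u a X)
    (hXfin : ∫⁻ ω, ENNReal.ofReal (u (X ω)) ∂P < ⊤) (hξmeas : Measurable ξ)
    (hu_nonneg : ∀ x : ℝ, 0 ≤ x → 0 ≤ u x) (hu_conc : ConcaveOn ℝ (Ici 0) u)
    (hu_deriv : ∀ x : ℝ, 0 < x → HasDerivAt u (u' x) x) (hu'_pos : ∀ x : ℝ, 0 < x → 0 < u' x)
    (hu'_zero : Tendsto u' (𝓝[>] 0) atTop) {α β M : ℝ} (hα : 0 < α) (hβ : 0 < β) (hM : 0 < M)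
    (hB : P ({ω | 0 < X ω} ∩ {ω | β ≤ X ω ∧ β ≤ ξ ω}) ≠ 0) :
    P ({ω | X ω = 0} ∩ {ω | α ≤ ξ ω ∧ ξ ω ≤ M}) = 0 := by
  by_contra hA
  have hXmeas := hX.1
  have hanti : AntitoneOn u' (Ioi 0) :=
    (hu_conc.subset Ioi_subset_Ici_self (convex_Ioi 0)).antitoneOn_of_hasDerivAt hu_deriv
  -- by the Inada condition at `0`, a small purchase in the states of zero consumption beats
  -- the marginal utility `u'(β / 2) / β` available elsewhere
  obtain ⟨t, ht, htpos : 0 < t⟩ := ((hu'_zero.eventually_gt_atTop (M * (u' (β / 2) / β))).and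
    self_mem_nhdsWithin).exists
  refine (hX.le_of_marginal_bounds hXfin hξmeas hu_nonneg hu_conc hu_deriv
    ((hXmeas (measurableSet_singleton 0)).inter ((measurableSet_le measurable_const hξmeas).inter
      (measurableSet_le hξmeas measurable_const)))
    ((measurableSet_lt measurable_const hXmeas).inter
      ((measurableSet_le measurable_const hXmeas).inter (measurableSet_le measurable_const hξmeas)))
    ?_ hA hB (mul_pos hα htpos) (by positivity : 0 < β ^ 2 / 2) (div_pos (hu'_pos t htpos) hM)
    ?_ ?_).not_gt ((lt_div_iff₀' hM).2 ht)
  · refine disjoint_left.2 fun ω hωA hωB => ?_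
    have : β ≤ X ω := hωB.2.1
    have : X ω = 0 := hωA.1
    linarith
  · rintro ω ⟨hX, hαξ, hξM⟩
    have hX : X ω = 0 := hX
    have hξ : 0 < ξ ω := hα.trans_le hαξ
    refine ⟨hξ, hX.ge, ?_⟩
    rw [hX, zero_add]
    refine div_le_div₀ (hu'_pos _ (by positivity)).le
      (hanti (mem_Ioi.2 (by positivity)) htpos ?_) hξ hξM
    calc α * t / ξ ω ≤ α * t / α := div_le_div_of_nonneg_left (by positivity) hα hαξ
      _ = t := by field_simp
  · rintro ω ⟨-, hβX, hβξ⟩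
    have hβX : β ≤ X ω := hβX
    have hβξ : β ≤ ξ ω := hβξ
    have hξ : 0 < ξ ω := hβ.trans_le hβξ
    have hsmall : β ^ 2 / 2 / ξ ω ≤ β / 2 := by
      rw [div_le_iff₀ hξ]
      nlinarith
    refine ⟨hξ, by linarith, ?_⟩
    refine div_le_div₀ (hu'_pos _ (by positivity)).le
      (hanti (mem_Ioi.2 (half_pos hβ)) ?_ ?_) hβ hβξ
    · simp only [mem_Ioi]; linarith
    · linarith

theorem IsOptimal.ae_pos [IsProbabilityMeasure P] (hX : IsOptimal P ξ u a X)
    (hXfin : ∫⁻ ω, ENNReal.ofReal (u (X ω)) ∂P < ⊤) (hξmeas : Measurable ξ)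
    (hξpos : ∀ᵐ ω ∂P, 0 < ξ ω) (hu_nonneg : ∀ x : ℝ, 0 ≤ x → 0 ≤ u x)
    (hu_conc : ConcaveOn ℝ (Ici 0) u) (hu_deriv : ∀ x : ℝ, 0 < x → HasDerivAt u (u' x) x)
    (hu'_pos : ∀ x : ℝ, 0 < x → 0 < u' x) (hu'_zero : Tendsto u' (𝓝[>] 0) atTop)
    (ha : 0 < a) : ∀ᵐ ω ∂P, 0 < X ω := by
  by_contra hneg
  have hzero : P {ω | X ω = 0} ≠ 0 := fun h => hneg <| by
    filter_upwards [hX.2.1, measure_eq_zero_iff_ae_notMem.1 h] with ω h0 hne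
    exact h0.lt_of_ne (Ne.symm hne)
  obtain ⟨n, hn⟩ := exists_measure_inter_setOf_ne_zero hzero
    (p := fun n ω => 1 / ((n : ℝ) + 1) ≤ ξ ω ∧ ξ ω ≤ (n : ℝ) + 1) <| by
      filter_upwards [hξpos] with ω hξ _
      exact ((eventually_one_div_add_one_le hξ).and
        ((tendsto_natCast_atTop_atTop.atTop_add tendsto_const_nhds).eventually_ge_atTop _)).exists
  obtain ⟨m, hm⟩ := exists_measure_inter_setOf_ne_zero (hX.measure_setOf_pos_ne_zero hξpos ha)
    (p := fun m ω => 1 / ((m : ℝ) + 1) ≤ X ω ∧ 1 / ((m : ℝ) + 1) ≤ ξ ω) <| by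
      filter_upwards [hξpos] with ω hξ hX
      exact ((eventually_one_div_add_one_le hX).and (eventually_one_div_add_one_le hξ)).exists
  exact hn (hX.measure_zero_inter_eq_zero hXfin hξmeas hu_nonneg hu_conc hu_deriv hu'_pos hu'_zero
    (by positivity) (by positivity) (by positivity) hm)

theorem exists_measure_inter_lt_marginal_ne_zero {S : Set Ω} (hS : P S ≠ 0)
    (hξpos : ∀ᵐ ω ∂P, 0 < ξ ω) (hXpos : ∀ᵐ ω ∂P, 0 < X ω)
    (hu'_cont : ∀ x : ℝ, 0 < x → ContinuousAt u' x) (hSc : ∀ ω ∈ S, c < u' (X ω) / ξ ω) :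
    ∃ n : ℕ, P (S ∩ {ω | 0 < ξ ω ∧ 0 ≤ X ω ∧
      c + 1 / ((n : ℝ) + 1) ≤ u' (X ω + 1 / ((n : ℝ) + 1) / ξ ω) / ξ ω}) ≠ 0 := by
  refine exists_measure_inter_setOf_ne_zero hS ?_
  filter_upwards [hXpos, hξpos] with ω hX hξ hω
  have hcZ := hSc ω hω
  have hτ := tendsto_one_div_add_atTop_nhds_zero_nat (𝕜 := ℝ)
  have hlim : Tendsto (fun n : ℕ => u' (X ω + 1 / ((n : ℝ) + 1) / ξ ω) / ξ ω) atTop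
      (𝓝 (u' (X ω) / ξ ω)) :=
    ((hu'_cont _ hX).tendsto.comp (by simpa using tendsto_const_nhds.add (hτ.div_const (ξ ω)))
      ).div_const _
  obtain ⟨n, h1, h2⟩ := ((hτ.eventually (eventually_lt_nhds (half_pos (sub_pos.2 hcZ)))).and
    (hlim.eventually (eventually_gt_nhds (by linarith : (c + u' (X ω) / ξ ω) / 2 <
      u' (X ω) / ξ ω)))).exists
  exact ⟨n, hξ, hX.le, by linarith⟩

theorem exists_measure_inter_marginal_le_ne_zero {S : Set Ω} (hS : P S ≠ 0)
    (hξpos : ∀ᵐ ω ∂P, 0 < ξ ω) (hXpos : ∀ᵐ ω ∂P, 0 < X ω)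
    (hu'_cont : ∀ x : ℝ, 0 < x → ContinuousAt u' x) (hSc : ∀ ω ∈ S, u' (X ω) / ξ ω < c) :
    ∃ m : ℕ, P (S ∩ {ω | 0 < ξ ω ∧ 1 / ((m : ℝ) + 1) / ξ ω < X ω ∧
      u' (X ω - 1 / ((m : ℝ) + 1) / ξ ω) / ξ ω ≤ c}) ≠ 0 := by
  refine exists_measure_inter_setOf_ne_zero hS ?_
  filter_upwards [hXpos, hξpos] with ω hX hξ hω
  have hstep : Tendsto (fun m : ℕ => 1 / ((m : ℝ) + 1) / ξ ω) atTop (𝓝 0) := by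
    simpa using tendsto_one_div_add_atTop_nhds_zero_nat.div_const (ξ ω)
  have hlim : Tendsto (fun m : ℕ => u' (X ω - 1 / ((m : ℝ) + 1) / ξ ω) / ξ ω) atTop
      (𝓝 (u' (X ω) / ξ ω)) :=
    ((hu'_cont _ hX).tendsto.comp (by simpa using tendsto_const_nhds.sub hstep)).div_const _
  obtain ⟨m, h1, h2⟩ := ((hstep.eventually (eventually_lt_nhds hX)).and
    (hlim.eventually (eventually_le_nhds (hSc ω hω)))).exists
  exact ⟨m, hξ, h1, h2⟩

theorem IsOptimal.ae_div_le_or_ae_lt_div [IsProbabilityMeasure P] (hX : IsOptimal P ξ u a X)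
    (hXfin : ∫⁻ ω, ENNReal.ofReal (u (X ω)) ∂P < ⊤) (hξmeas : Measurable ξ)
    (hξpos : ∀ᵐ ω ∂P, 0 < ξ ω) (hu_nonneg : ∀ x : ℝ, 0 ≤ x → 0 ≤ u x)
    (hu_conc : ConcaveOn ℝ (Ici 0) u) (hu_deriv : ∀ x : ℝ, 0 < x → HasDerivAt u (u' x) x)
    (hu'_pos : ∀ x : ℝ, 0 < x → 0 < u' x) (hu'_meas : Measurable u')
    (hu'_cont : ∀ x : ℝ, 0 < x → ContinuousAt u' x) (hXpos : ∀ᵐ ω ∂P, 0 < X ω) (c : ℝ) :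
    (∀ᵐ ω ∂P, u' (X ω) / ξ ω ≤ c) ∨ ∀ᵐ ω ∂P, c < u' (X ω) / ξ ω := by
  rcases le_or_gt c 0 with hc | hc
  · right
    filter_upwards [hXpos, hξpos] with ω hX hξ using hc.trans_lt (div_pos (hu'_pos _ hX) hξ)
  by_contra h
  simp only [not_or, ae_iff, not_le, not_lt] at h
  obtain ⟨n, hn⟩ := exists_measure_inter_lt_marginal_ne_zero h.1 hξpos hXpos hu'_cont
    fun ω hω => hω
  set d := c + 1 / ((n : ℝ) + 1)
  have hcd : c < (c + d) / 2 ∧ (c + d) / 2 < d := by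
    constructor <;> linarith [show (0 : ℝ) < 1 / ((n : ℝ) + 1) by positivity]
  obtain ⟨m, hm⟩ := exists_measure_inter_marginal_le_ne_zero h.2 hξpos hXpos hu'_cont
    fun ω (hω : u' (X ω) / ξ ω ≤ c) => hω.trans_lt hcd.1
  have hXmeas := hX.1
  have hZmeas : Measurable fun ω => u' (X ω) / ξ ω := (hu'_meas.comp hXmeas).div hξmeas
  refine (hX.le_of_marginal_bounds hXfin hξmeas hu_nonneg hu_conc hu_deriv
    ((measurableSet_lt measurable_const hZmeas).inter ?_)
    ((measurableSet_le hZmeas measurable_const).inter ?_) ?_ hn hm (by positivity)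
    (by positivity) (by linarith) (fun ω hω => hω.2) (fun ω hω => hω.2)).not_gt hcd.2
  · exact (measurableSet_lt measurable_const hξmeas).inter
      ((measurableSet_le measurable_const hXmeas).inter (measurableSet_le measurable_const
        (((hu'_meas.comp (hXmeas.add (measurable_const.div hξmeas))).div hξmeas))))
  · exact (measurableSet_lt measurable_const hξmeas).inter
      ((measurableSet_lt (measurable_const.div hξmeas) hXmeas).inter (measurableSet_le
        ((hu'_meas.comp (hXmeas.sub (measurable_const.div hξmeas))).div hξmeas) measurable_const))
  · exact disjoint_left.2 fun ω hA hB => (lt_irrefl c) (hA.1.trans_le hB.1)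

theorem IsOptimal.exists_ae_eq_mul [IsProbabilityMeasure P] (hX : IsOptimal P ξ u a X)
    (hXfin : ∫⁻ ω, ENNReal.ofReal (u (X ω)) ∂P < ⊤) (hξmeas : Measurable ξ)
    (hξpos : ∀ᵐ ω ∂P, 0 < ξ ω) (hu_nonneg : ∀ x : ℝ, 0 ≤ x → 0 ≤ u x)
    (hu_conc : ConcaveOn ℝ (Ici 0) u) (hu_deriv : ∀ x : ℝ, 0 < x → HasDerivAt u (u' x) x)
    (hu'_pos : ∀ x : ℝ, 0 < x → 0 < u' x) (hu'_meas : Measurable u')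
    (hu'_cont : ∀ x : ℝ, 0 < x → ContinuousAt u' x) (hXpos : ∀ᵐ ω ∂P, 0 < X ω) :
    ∃ lam : ℝ, 0 < lam ∧ ∀ᵐ ω ∂P, u' (X ω) = lam * ξ ω := by
  obtain ⟨lam, hlam⟩ := exists_eventuallyEq_const_of_forall_separating (· ∈ range (Iic : ℝ → Set ℝ))
    (f := fun ω => u' (X ω) / ξ ω) (l := ae P) <| by
      rintro _ ⟨c, rfl⟩
      exact (hX.ae_div_le_or_ae_lt_div hXfin hξmeas hξpos hu_nonneg hu_conc hu_deriv hu'_pos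
        hu'_meas hu'_cont hXpos c).imp id fun h => h.mono fun ω => not_le.2
  have hlam_ae : ∀ᵐ ω ∂P, u' (X ω) = lam * ξ ω := by
    filter_upwards [hlam, hξpos] with ω hω hξ
    exact (div_eq_iff hξ.ne').1 hω
  obtain ⟨ω, hω, hX, hξ⟩ := (hlam_ae.and (hXpos.and hξpos)).exists
  exact ⟨lam, pos_of_mul_pos_left (hω ▸ hu'_pos _ hX) hξ.le, hlam_ae⟩

end Optimality

theorem lagrange_necessity_general
    {Ω : Type*} [MeasurableSpace Ω] (P : Measure Ω) [IsProbabilityMeasure P]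
    (ξ : Ω → ℝ) (hξmeas : Measurable ξ) (hξpos : ∀ᵐ ω ∂P, 0 < ξ ω)
    (u u' u'' : ℝ → ℝ)
    (hu_nonneg : ∀ x : ℝ, 0 ≤ x → 0 ≤ u x)
    (hu_conc : StrictConcaveOn ℝ (Set.Ici (0:ℝ)) u)
    (hu_deriv : ∀ x : ℝ, 0 < x → HasDerivAt u (u' x) x)
    (hu_deriv2 : ∀ x : ℝ, 0 < x → HasDerivAt u' (u'' x) x)
    (hu'_pos : ∀ x : ℝ, 0 < x → 0 < u' x)
    (hu'_zero : Tendsto u' (nhdsWithin 0 (Set.Ioi 0)) atTop)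
    (I : ℝ → ℝ)
    (hI_left : ∀ x : ℝ, 0 < x → I (u' x) = x)
    (a : ℝ) (ha : 0 < a) (X : Ω → ℝ)
    (hXopt : IsOptimal P ξ u a X)
    (hXfin : ∫⁻ ω, ENNReal.ofReal (u (X ω)) ∂P < ⊤)
    :
    ∃ lam : ℝ, 0 < lam ∧ X =ᵐ[P] fun ω => I (lam * ξ ω) := by
  have hXpos := hXopt.ae_pos hXfin hξmeas hξpos hu_nonneg hu_conc.concaveOn hu_deriv hu'_pos
    hu'_zero ha
  -- `u'` need not be measurable, so we run the argument with `deriv u`, which agrees with it on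
  -- `(0, ∞)`
  have hderiv : ∀ x : ℝ, 0 < x → deriv u x = u' x := fun x hx => (hu_deriv x hx).deriv
  obtain ⟨lam, hlam, hX⟩ := hXopt.exists_ae_eq_mul (u' := deriv u) hXfin hξmeas hξpos hu_nonneg
    hu_conc.concaveOn (fun x hx => (hu_deriv x hx).differentiableAt.hasDerivAt)
    (fun x hx => hderiv x hx ▸ hu'_pos x hx) (measurable_deriv u)
    (fun x hx => (hu_deriv2 x hx).continuousAt.congr
      ((eventually_gt_nhds hx).mono fun y hy => (hderiv y hy).symm)) hXpos
  refine ⟨lam, hlam, ?_⟩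
  filter_upwards [hXpos, hX] with ω hpos hω
  rw [← hω, hderiv _ hpos, hI_left _ hpos]

theorem lagrange_necessity
    {Ω : Type*} [MeasurableSpace Ω] (P : Measure Ω) [IsProbabilityMeasure P]
    (ξ : Ω → ℝ) (hξmeas : Measurable ξ) (hξpos : ∀ᵐ ω ∂P, 0 < ξ ω)
    (u u' u'' : ℝ → ℝ) (hu_meas : Measurable u)
    (hu0 : u 0 = 0) (hu_nonneg : ∀ x : ℝ, 0 ≤ x → 0 ≤ u x)
    (hu_mono : StrictMonoOn u (Set.Ici (0:ℝ)))
    (hu_conc : StrictConcaveOn ℝ (Set.Ici (0:ℝ)) u)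
    (hu_deriv : ∀ x : ℝ, 0 < x → HasDerivAt u (u' x) x)
    (hu_deriv2 : ∀ x : ℝ, 0 < x → HasDerivAt u' (u'' x) x)
    (hu'_pos : ∀ x : ℝ, 0 < x → 0 < u' x)
    (hu'_zero : Tendsto u' (nhdsWithin 0 (Set.Ioi 0)) atTop)
    (hu'_top : Tendsto u' atTop (nhds 0))
    (I : ℝ → ℝ) (hI_meas : Measurable I) (hI_pos : ∀ y : ℝ, 0 < y → 0 < I y)
    (hI_left : ∀ x : ℝ, 0 < x → I (u' x) = x)
    (hI_right : ∀ y : ℝ, 0 < y → u' (I y) = y)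
    (a : ℝ) (ha : 0 < a) (X : Ω → ℝ)
    (hXopt : IsOptimal P ξ u a X)
    (hXfin : ∫⁻ ω, ENNReal.ofReal (u (X ω)) ∂P < ⊤)
    :
    ∃ lam : ℝ, 0 < lam ∧ X =ᵐ[P] fun ω => I (lam * ξ ω) :=
  lagrange_necessity_general P ξ hξmeas hξpos u u' u'' hu_nonneg hu_conc hu_deriv hu_deriv2 hu'_pos
    hu'_zero I hI_left a ha X hXopt hXfin
end

section
/- Sufficiency part of the Lagrange method: if λ>0 satisfies E[I(λξ)ξ]=a<+∞ and E[u(I(λξ))]<+∞, then X*=I(λξ) is an optimal solution of Problem (P_a) with parameter a, and it is the unique optimal solution up to almost sure equality. -/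
/-!
At a point where `ξ > 0`, the value `I(λξ)` is the unique maximiser over `y ≥ 0` of the
pointwise Lagrangian `u y - λξ y`: it is a critical point, and `u` is strictly concave.
Integrating, every feasible `Y` has `E[u(Y)] - λa ≤ E[u(I(λξ))] - λa`. If `Y` is also optimal,
the integrated inequality is an equality between finite integrals, so the pointwise one is an
equality almost surely, which by strictness forces `Y = I(λξ)` almost surely. Everything is
phrased in `ℝ≥0∞` with the `λ`-terms moved across, so no subtraction is needed.
-/

open MeasureTheory Filter Set
open scoped ENNReal

theorem StrictConcaveOn.sub_mul_lt_of_hasDerivAt {S : Set ℝ} {f : ℝ → ℝ} {x y c : ℝ}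
    (hf : StrictConcaveOn ℝ S f) (hx : x ∈ S) (hy : y ∈ S) (hyx : y ≠ x)
    (hd : HasDerivAt f c x) : f y - c * y < f x - c * x := by
  rcases hyx.lt_or_gt with h | h
  · have hslope := hf.lt_slope_of_hasDerivAt hy hx h hd
    rw [slope_def_field, lt_div_iff₀ (sub_pos.mpr h)] at hslope
    linarith
  · have hslope := hf.slope_lt_of_hasDerivAt hx hy h hd
    rw [slope_def_field, div_lt_iff₀ (sub_pos.mpr h)] at hslope
    linarith

theorem StrictConcaveOn.ofReal_add_mul_lt_of_hasDerivAt {f : ℝ → ℝ} {x y c s : ℝ}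
    (hf : StrictConcaveOn ℝ (Ici 0) f) (hx : 0 ≤ x) (hy : 0 ≤ y) (hyx : y ≠ x)
    (hfx : 0 ≤ f x) (hfy : 0 ≤ f y) (hc : 0 ≤ c) (hs : 0 ≤ s) (hd : HasDerivAt f (c * s) x) :
    ENNReal.ofReal (f y) + ENNReal.ofReal c * ENNReal.ofReal (x * s)
      < ENNReal.ofReal (f x) + ENNReal.ofReal c * ENNReal.ofReal (y * s) := by
  have hlt := hf.sub_mul_lt_of_hasDerivAt hx hy hyx hd
  have hcxs : 0 ≤ c * (x * s) := by positivity
  have hcys : 0 ≤ c * (y * s) := by positivity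
  rw [← ENNReal.ofReal_mul hc, ← ENNReal.ofReal_mul hc, ← ENNReal.ofReal_add hfy hcxs,
    ← ENNReal.ofReal_add hfx hcys, ENNReal.ofReal_lt_ofReal_iff']
  constructor <;> nlinarith

section Lintegral

variable {Ω : Type*} [MeasurableSpace Ω] {P : Measure Ω} {f g φ ψ : Ω → ℝ≥0∞} {c : ℝ≥0∞}

theorem lintegral_le_of_ae_add_const_mul_le (hφ : AEMeasurable φ P) (hc : c ≠ ∞)
    (h : ∀ᵐ ω ∂P, f ω + c * ψ ω ≤ g ω + c * φ ω) (hφψ : ∫⁻ ω, φ ω ∂P = ∫⁻ ω, ψ ω ∂P)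
    (hψ_fin : ∫⁻ ω, ψ ω ∂P ≠ ∞) : ∫⁻ ω, f ω ∂P ≤ ∫⁻ ω, g ω ∂P := by
  have : ∫⁻ ω, f ω ∂P + c * ∫⁻ ω, ψ ω ∂P ≤ ∫⁻ ω, g ω ∂P + c * ∫⁻ ω, ψ ω ∂P :=
    calc ∫⁻ ω, f ω ∂P + c * ∫⁻ ω, ψ ω ∂P
        = ∫⁻ ω, f ω ∂P + ∫⁻ ω, c * ψ ω ∂P := by rw [lintegral_const_mul' _ _ hc]
      _ ≤ ∫⁻ ω, f ω + c * ψ ω ∂P := le_lintegral_add _ _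
      _ ≤ ∫⁻ ω, g ω + c * φ ω ∂P := lintegral_mono_ae h
      _ = ∫⁻ ω, g ω ∂P + c * ∫⁻ ω, ψ ω ∂P := by
        rw [lintegral_add_right' _ (hφ.const_mul c), lintegral_const_mul' _ _ hc, hφψ]
  exact (ENNReal.add_le_add_iff_right (ENNReal.mul_ne_top hc hψ_fin)).mp this

theorem ae_add_const_mul_eq_of_lintegral_le (hg : AEMeasurable g P) (hφ : AEMeasurable φ P)
    (hc : c ≠ ∞) (h : ∀ᵐ ω ∂P, f ω + c * ψ ω ≤ g ω + c * φ ω)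
    (hgf : ∫⁻ ω, g ω ∂P ≤ ∫⁻ ω, f ω ∂P) (hφψ : ∫⁻ ω, φ ω ∂P = ∫⁻ ω, ψ ω ∂P)
    (hg_fin : ∫⁻ ω, g ω ∂P ≠ ∞) (hψ_fin : ∫⁻ ω, ψ ω ∂P ≠ ∞) :
    (fun ω ↦ f ω + c * ψ ω) =ᵐ[P] fun ω ↦ g ω + c * φ ω := by
  have hsum : ∫⁻ ω, g ω + c * φ ω ∂P = ∫⁻ ω, g ω ∂P + c * ∫⁻ ω, ψ ω ∂P := by
    rw [lintegral_add_right' _ (hφ.const_mul c), lintegral_const_mul' _ _ hc, hφψ]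
  refine ae_eq_of_ae_le_of_lintegral_le h ?_ (hg.add (hφ.const_mul c)) ?_
  · refine ne_top_of_le_ne_top ?_ (lintegral_mono_ae h)
    rw [hsum]
    exact ENNReal.add_ne_top.mpr ⟨hg_fin, ENNReal.mul_ne_top hc hψ_fin⟩
  · calc ∫⁻ ω, g ω + c * φ ω ∂P = ∫⁻ ω, g ω ∂P + c * ∫⁻ ω, ψ ω ∂P := hsum
      _ ≤ ∫⁻ ω, f ω ∂P + ∫⁻ ω, c * ψ ω ∂P := by rw [lintegral_const_mul' _ _ hc]; gcongr
      _ ≤ ∫⁻ ω, f ω + c * ψ ω ∂P := le_lintegral_add _ _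

end Lintegral

section Lagrangian

variable {Ω : Type*} [MeasurableSpace Ω] {P : Measure Ω} {ξ : Ω → ℝ} {u : ℝ → ℝ} {lam : ℝ}
  {X Y : Ω → ℝ}

theorem ae_lagrangian_lt_of_ne (hu : StrictConcaveOn ℝ (Ici 0) u)
    (hu_nonneg : ∀ x, 0 ≤ x → 0 ≤ u x) (hlam : 0 ≤ lam) (hξ : ∀ᵐ ω ∂P, 0 ≤ ξ ω)
    (hX : ∀ᵐ ω ∂P, 0 ≤ X ω ∧ HasDerivAt u (lam * ξ ω) (X ω)) (hY : ∀ᵐ ω ∂P, 0 ≤ Y ω) :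
    ∀ᵐ ω ∂P, Y ω ≠ X ω →
      ENNReal.ofReal (u (Y ω)) + ENNReal.ofReal lam * ENNReal.ofReal (X ω * ξ ω)
        < ENNReal.ofReal (u (X ω)) + ENNReal.ofReal lam * ENNReal.ofReal (Y ω * ξ ω) := by
  filter_upwards [hX, hY, hξ] with ω ⟨hXω, hd⟩ hYω hξω hne
  exact hu.ofReal_add_mul_lt_of_hasDerivAt hXω hYω hne (hu_nonneg _ hXω) (hu_nonneg _ hYω)
    hlam hξω hd

theorem ae_lagrangian_le (hu : StrictConcaveOn ℝ (Ici 0) u)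
    (hu_nonneg : ∀ x, 0 ≤ x → 0 ≤ u x) (hlam : 0 ≤ lam) (hξ : ∀ᵐ ω ∂P, 0 ≤ ξ ω)
    (hX : ∀ᵐ ω ∂P, 0 ≤ X ω ∧ HasDerivAt u (lam * ξ ω) (X ω)) (hY : ∀ᵐ ω ∂P, 0 ≤ Y ω) :
    ∀ᵐ ω ∂P,
      ENNReal.ofReal (u (Y ω)) + ENNReal.ofReal lam * ENNReal.ofReal (X ω * ξ ω)
        ≤ ENNReal.ofReal (u (X ω)) + ENNReal.ofReal lam * ENNReal.ofReal (Y ω * ξ ω) := by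
  filter_upwards [ae_lagrangian_lt_of_ne hu hu_nonneg hlam hξ hX hY] with ω h
  rcases eq_or_ne (Y ω) (X ω) with heq | hne
  · rw [heq]
  · exact (h hne).le

theorem lintegral_utility_le_of_critical (hu : StrictConcaveOn ℝ (Ici 0) u)
    (hu_nonneg : ∀ x, 0 ≤ x → 0 ≤ u x) (hlam : 0 ≤ lam) (hξ_meas : AEMeasurable ξ P)
    (hξ : ∀ᵐ ω ∂P, 0 ≤ ξ ω) (hX : ∀ᵐ ω ∂P, 0 ≤ X ω ∧ HasDerivAt u (lam * ξ ω) (X ω))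
    (hX_budget : ∫⁻ ω, ENNReal.ofReal (X ω * ξ ω) ∂P ≠ ∞)
    (hY_meas : AEMeasurable Y P) (hY : ∀ᵐ ω ∂P, 0 ≤ Y ω)
    (hYb : ∫⁻ ω, ENNReal.ofReal (Y ω * ξ ω) ∂P = ∫⁻ ω, ENNReal.ofReal (X ω * ξ ω) ∂P) :
    ∫⁻ ω, ENNReal.ofReal (u (Y ω)) ∂P ≤ ∫⁻ ω, ENNReal.ofReal (u (X ω)) ∂P :=
  lintegral_le_of_ae_add_const_mul_le (hY_meas.mul hξ_meas).ennreal_ofReal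
    ENNReal.ofReal_ne_top (ae_lagrangian_le hu hu_nonneg hlam hξ hX hY) hYb hX_budget

theorem ae_eq_of_critical_of_lintegral_utility_le (hu : StrictConcaveOn ℝ (Ici 0) u)
    (hu_nonneg : ∀ x, 0 ≤ x → 0 ≤ u x) (hu_meas : Measurable u) (hlam : 0 ≤ lam)
    (hξ_meas : AEMeasurable ξ P) (hξ : ∀ᵐ ω ∂P, 0 ≤ ξ ω) (hX_meas : AEMeasurable X P)
    (hX : ∀ᵐ ω ∂P, 0 ≤ X ω ∧ HasDerivAt u (lam * ξ ω) (X ω))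
    (hX_budget : ∫⁻ ω, ENNReal.ofReal (X ω * ξ ω) ∂P ≠ ∞)
    (hX_fin : ∫⁻ ω, ENNReal.ofReal (u (X ω)) ∂P ≠ ∞)
    (hY_meas : AEMeasurable Y P) (hY : ∀ᵐ ω ∂P, 0 ≤ Y ω)
    (hYb : ∫⁻ ω, ENNReal.ofReal (Y ω * ξ ω) ∂P = ∫⁻ ω, ENNReal.ofReal (X ω * ξ ω) ∂P)
    (hXY : ∫⁻ ω, ENNReal.ofReal (u (X ω)) ∂P ≤ ∫⁻ ω, ENNReal.ofReal (u (Y ω)) ∂P) :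
    Y =ᵐ[P] X := by
  have heq := ae_add_const_mul_eq_of_lintegral_le
    (hu_meas.comp_aemeasurable hX_meas).ennreal_ofReal (hY_meas.mul hξ_meas).ennreal_ofReal
    ENNReal.ofReal_ne_top (ae_lagrangian_le hu hu_nonneg hlam hξ hX hY) hXY hYb hX_fin hX_budget
  filter_upwards [heq, ae_lagrangian_lt_of_ne hu hu_nonneg hlam hξ hX hY] with ω hω hlt
  by_contra hne
  exact (hlt hne).ne hω

end Lagrangian

theorem lagrange_sufficiency_general
    {Ω : Type*} [MeasurableSpace Ω] (P : Measure Ω)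
    (ξ : Ω → ℝ) (hξmeas : Measurable ξ) (hξpos : ∀ᵐ ω ∂P, 0 < ξ ω)
    (u u' : ℝ → ℝ) (hu_meas : Measurable u)
    (hu_nonneg : ∀ x : ℝ, 0 ≤ x → 0 ≤ u x)
    (hu_conc : StrictConcaveOn ℝ (Set.Ici (0:ℝ)) u)
    (hu_deriv : ∀ x : ℝ, 0 < x → HasDerivAt u (u' x) x)
    (I : ℝ → ℝ) (hI_meas : Measurable I) (hI_pos : ∀ y : ℝ, 0 < y → 0 < I y)
    (hI_right : ∀ y : ℝ, 0 < y → u' (I y) = y)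
    (a : ℝ) (lam : ℝ) (hlam : 0 < lam)
    (hbudget : fLag P ξ I lam = ENNReal.ofReal a)
    (hfin : ∫⁻ ω, ENNReal.ofReal (u (I (lam * ξ ω))) ∂P < ⊤)
    :
    IsOptimal P ξ u a (fun ω => I (lam * ξ ω)) ∧
      ∀ Y : Ω → ℝ, IsOptimal P ξ u a Y → Y =ᵐ[P] fun ω => I (lam * ξ ω) := by
  set X : Ω → ℝ := fun ω ↦ I (lam * ξ ω)
  have hX_meas : Measurable X := hI_meas.comp (hξmeas.const_mul lam)
  have hξ : ∀ᵐ ω ∂P, 0 ≤ ξ ω := hξpos.mono fun ω h ↦ h.le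
  have hX_crit : ∀ᵐ ω ∂P, 0 ≤ X ω ∧ HasDerivAt u (lam * ξ ω) (X ω) := by
    filter_upwards [hξpos] with ω hω
    have hpos := mul_pos hlam hω
    exact ⟨(hI_pos _ hpos).le, hI_right _ hpos ▸ hu_deriv _ (hI_pos _ hpos)⟩
  have hX_budget : ∫⁻ ω, ENNReal.ofReal (X ω * ξ ω) ∂P ≠ ∞ :=
    ne_of_eq_of_ne hbudget ENNReal.ofReal_ne_top
  have hX_nonneg : ∀ᵐ ω ∂P, 0 ≤ X ω := hX_crit.mono fun ω h ↦ h.1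
  refine ⟨⟨hX_meas, hX_nonneg, hbudget, fun Y hY_meas hY hYb ↦ ?_⟩,
    fun Y ⟨hY_meas, hY, hYb, hY_opt⟩ ↦ ?_⟩
  · exact lintegral_utility_le_of_critical hu_conc hu_nonneg hlam.le hξmeas.aemeasurable hξ
      hX_crit hX_budget hY_meas.aemeasurable hY (hYb.trans hbudget.symm)
  · exact ae_eq_of_critical_of_lintegral_utility_le hu_conc hu_nonneg hu_meas hlam.le
      hξmeas.aemeasurable hξ hX_meas.aemeasurable hX_crit hX_budget hfin.ne hY_meas.aemeasurable hY
      (hYb.trans hbudget.symm) (hY_opt X hX_meas hX_nonneg hbudget)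

theorem lagrange_sufficiency
    {Ω : Type*} [MeasurableSpace Ω] (P : Measure Ω) [IsProbabilityMeasure P]
    (ξ : Ω → ℝ) (hξmeas : Measurable ξ) (hξpos : ∀ᵐ ω ∂P, 0 < ξ ω)
    (u u' u'' : ℝ → ℝ) (hu_meas : Measurable u)
    (hu0 : u 0 = 0) (hu_nonneg : ∀ x : ℝ, 0 ≤ x → 0 ≤ u x)
    (hu_mono : StrictMonoOn u (Set.Ici (0:ℝ)))
    (hu_conc : StrictConcaveOn ℝ (Set.Ici (0:ℝ)) u)
    (hu_deriv : ∀ x : ℝ, 0 < x → HasDerivAt u (u' x) x)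
    (hu_deriv2 : ∀ x : ℝ, 0 < x → HasDerivAt u' (u'' x) x)
    (hu'_pos : ∀ x : ℝ, 0 < x → 0 < u' x)
    (hu'_zero : Tendsto u' (nhdsWithin 0 (Set.Ioi 0)) atTop)
    (hu'_top : Tendsto u' atTop (nhds 0))
    (I : ℝ → ℝ) (hI_meas : Measurable I) (hI_pos : ∀ y : ℝ, 0 < y → 0 < I y)
    (hI_left : ∀ x : ℝ, 0 < x → I (u' x) = x)
    (hI_right : ∀ y : ℝ, 0 < y → u' (I y) = y)
    (a : ℝ) (ha : 0 < a) (lam : ℝ) (hlam : 0 < lam)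
    (hbudget : fLag P ξ I lam = ENNReal.ofReal a)
    (hfin : ∫⁻ ω, ENNReal.ofReal (u (I (lam * ξ ω))) ∂P < ⊤)
    :
    IsOptimal P ξ u a (fun ω => I (lam * ξ ω)) ∧
      ∀ Y : Ω → ℝ, IsOptimal P ξ u a Y → Y =ᵐ[P] fun ω => I (lam * ξ ω) :=
  lagrange_sufficiency_general P ξ hξmeas hξpos u u' hu_meas hu_nonneg hu_conc hu_deriv I hI_meas
    hI_pos hI_right a lam hlam hbudget hfin
end

section
/- If E[I(λξ)ξ]=+∞ for every λ>0, then V(a)=+∞ for every a>0 (i.e., Problem (P_a) is ill-posed for every a>0). -/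
open MeasureTheory Filter Set
open scoped ENNReal

/-!
Fix `λ > 0`. Since `E[I(λξ)ξ] = ∞`, restricting `I(λξ)` to a set where `I(λξ)ξ` is bounded and
scaling it down gives a feasible `X` with `0 ≤ X ≤ I(λξ)`. Concavity and `u 0 = 0` give
`u x ≥ x u'(z)` for `0 ≤ x ≤ z`, so `u(X) ≥ X u'(I(λξ)) = λXξ` and `E[u(X)] ≥ λa`.
As `λ` is arbitrary, `V(a) = ∞`.
-/

lemma ConcaveOn.mul_le_of_hasDerivAt {u : ℝ → ℝ} {d x z : ℝ} (hu : ConcaveOn ℝ (Ici 0) u)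
    (hu0 : u 0 = 0) (hd : HasDerivAt u d z) (hx : 0 ≤ x) (hxz : x ≤ z) : x * d ≤ u x := by
  rcases hx.eq_or_lt with rfl | hx
  · simp [hu0]
  have hz : 0 < z := hx.trans_le hxz
  have hslope : d ≤ slope u 0 x := calc
    d ≤ slope u 0 z := hu.le_slope_of_hasDerivAt self_mem_Ici hz.le hz hd
    _ ≤ slope u 0 x := hu.antitoneOn_slope_gt self_mem_Ici ⟨hx.le, hx⟩ ⟨hz.le, hz⟩ hxz
  rw [slope_def_field, hu0, sub_zero, sub_zero, le_div_iff₀ hx] at hslope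
  linarith

section Truncation

variable {Ω : Type*} [MeasurableSpace Ω] {P : Measure Ω} [IsFiniteMeasure P]

lemma exists_setLIntegral_gt_ne_top {F : Ω → ℝ≥0∞} (hF : Measurable F) (hF_fin : ∀ ω, F ω ≠ ⊤)
    (htop : ∫⁻ ω, F ω ∂P = ⊤) {b : ℝ≥0∞} (hb : b < ⊤) :
    ∃ s, MeasurableSet s ∧ b < ∫⁻ ω in s, F ω ∂P ∧ ∫⁻ ω in s, F ω ∂P ≠ ⊤ := by
  let s : ℕ → Set Ω := fun n => {ω | F ω ≤ n}
  have hs_mono : Monotone s := fun m n hmn ω (hω : F ω ≤ m) =>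
    hω.trans (by exact_mod_cast hmn)
  have hs_univ : ⋃ n, s n = univ :=
    eq_univ_of_forall fun ω =>
      mem_iUnion.2 ((ENNReal.exists_nat_gt (hF_fin ω)).imp fun _ h => h.le)
  have hsup : ⨆ n, ∫⁻ ω in s n, F ω ∂P = ⊤ := by
    rw [← setLIntegral_iUnion_of_directed F hs_mono.directed_le, hs_univ, Measure.restrict_univ,
      htop]
  obtain ⟨n, hn⟩ := lt_iSup_iff.1 (hsup ▸ hb)
  have hs_meas : MeasurableSet (s n) := measurableSet_le hF measurable_const
  refine ⟨s n, hs_meas, hn, ne_top_of_le_ne_top (b := n * P (s n)) ?_ ?_⟩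
  · exact ENNReal.mul_ne_top (ENNReal.natCast_ne_top n) (measure_ne_top P _)
  · rw [← setLIntegral_const]
    exact setLIntegral_mono' hs_meas fun ω hω => hω

lemma exists_lintegral_mul_eq_ofReal {G : Ω → ℝ} (hG : Measurable G)
    (htop : ∫⁻ ω, ENNReal.ofReal (G ω) ∂P = ⊤) (a : ℝ) :
    ∃ c : Ω → ℝ, Measurable c ∧ (∀ ω, c ω ∈ Icc 0 1) ∧
      ∫⁻ ω, ENNReal.ofReal (c ω * G ω) ∂P = ENNReal.ofReal a := by
  obtain ⟨s, hs, hlt, hfin⟩ := exists_setLIntegral_gt_ne_top hG.ennreal_ofReal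
    (fun _ => ENNReal.ofReal_ne_top) htop (b := ENNReal.ofReal a) ENNReal.ofReal_lt_top
  set B := ∫⁻ ω in s, ENNReal.ofReal (G ω) ∂P
  have hB0 : B ≠ 0 := (pos_of_gt hlt).ne'
  have hθ_le : ENNReal.ofReal a / B ≤ 1 := ENNReal.div_le_of_le_mul (by simpa using hlt.le)
  have hθ_fin : ENNReal.ofReal a / B ≠ ⊤ := ne_top_of_le_ne_top ENNReal.one_ne_top hθ_le
  set θ := (ENNReal.ofReal a / B).toReal
  refine ⟨s.indicator fun _ => θ, measurable_const.indicator hs, fun ω => ?_, ?_⟩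
  · by_cases hω : ω ∈ s
    · rw [indicator_of_mem hω]
      exact ⟨ENNReal.toReal_nonneg,
        ENNReal.toReal_le_of_le_ofReal zero_le_one (by simpa using hθ_le)⟩
    · rw [indicator_of_notMem hω]
      exact ⟨le_rfl, zero_le_one⟩
  · have hpt : ∀ ω, ENNReal.ofReal (s.indicator (fun _ => θ) ω * G ω)
        = s.indicator (fun ω => ENNReal.ofReal θ * ENNReal.ofReal (G ω)) ω := by
      intro ω
      by_cases hω : ω ∈ s
      · simp only [indicator_of_mem hω]
        exact ENNReal.ofReal_mul ENNReal.toReal_nonneg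
      · simp [hω]
    simp_rw [hpt]
    rw [lintegral_indicator hs, lintegral_const_mul' _ _ ENNReal.ofReal_ne_top,
      ENNReal.ofReal_toReal hθ_fin, ENNReal.div_mul_cancel hB0 hfin]

end Truncation

lemma lintegral_le_Vval {Ω : Type*} [MeasurableSpace Ω] {P : Measure Ω} {ξ : Ω → ℝ}
    {u : ℝ → ℝ} {a : ℝ} {X : Ω → ℝ} (hX : Measurable X) (hX_nonneg : ∀ᵐ ω ∂P, 0 ≤ X ω)
    (hX_budget : ∫⁻ ω, ENNReal.ofReal (X ω * ξ ω) ∂P = ENNReal.ofReal a) :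
    ∫⁻ ω, ENNReal.ofReal (u (X ω)) ∂P ≤ Vval P ξ u a :=
  le_iSup_of_le X <| le_iSup_of_le hX <| le_iSup_of_le hX_nonneg <| le_iSup_of_le hX_budget le_rfl

theorem illposed_of_f_infinite_general
    {Ω : Type*} [MeasurableSpace Ω] (P : Measure Ω) [IsProbabilityMeasure P]
    (ξ : Ω → ℝ) (hξmeas : Measurable ξ) (hξpos : ∀ᵐ ω ∂P, 0 < ξ ω)
    (u u' : ℝ → ℝ)
    (hu0 : u 0 = 0)
    (hu_conc : StrictConcaveOn ℝ (Set.Ici (0:ℝ)) u)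
    (hu_deriv : ∀ x : ℝ, 0 < x → HasDerivAt u (u' x) x)
    (I : ℝ → ℝ) (hI_meas : Measurable I) (hI_pos : ∀ y : ℝ, 0 < y → 0 < I y)
    (hI_right : ∀ y : ℝ, 0 < y → u' (I y) = y)
    (hinf : ∀ lam : ℝ, 0 < lam → fLag P ξ I lam = ⊤)
    :
    ∀ a : ℝ, 0 < a → Vval P ξ u a = ⊤ := by
  intro a ha
  refine ENNReal.eq_top_of_forall_nnreal_le fun r => ?_
  set lam := (r + 1) / a
  have hlam : 0 < lam := by positivity
  have hZ_meas : Measurable fun ω => I (lam * ξ ω) := hI_meas.comp (measurable_const.mul hξmeas)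
  obtain ⟨c, hc_meas, hc01, hc_budget⟩ :=
    exists_lintegral_mul_eq_ofReal (G := fun ω => I (lam * ξ ω) * ξ ω) (hZ_meas.mul hξmeas)
      (hinf lam hlam) a
  set X := fun ω => c ω * I (lam * ξ ω)
  have hX_budget : ∫⁻ ω, ENNReal.ofReal (X ω * ξ ω) ∂P = ENNReal.ofReal a := by
    simpa only [X, mul_assoc] using hc_budget
  have hX_nonneg : ∀ᵐ ω ∂P, 0 ≤ X ω := hξpos.mono fun ω hω =>
    mul_nonneg (hc01 ω).1 (hI_pos _ (by positivity)).le
  have hX_util : ∀ᵐ ω ∂P, lam * (X ω * ξ ω) ≤ u (X ω) := by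
    filter_upwards [hξpos, hX_nonneg] with ω hω hXω
    have hy : 0 < lam * ξ ω := by positivity
    have hd := hI_right _ hy ▸ hu_deriv _ (hI_pos _ hy)
    have hXz : X ω ≤ I (lam * ξ ω) := mul_le_of_le_one_left (hI_pos _ hy).le (hc01 ω).2
    linarith [hu_conc.concaveOn.mul_le_of_hasDerivAt hu0 hd hXω hXz]
  calc (r : ℝ≥0∞) ≤ ENNReal.ofReal lam * ENNReal.ofReal a := by
        rw [← ENNReal.ofReal_mul hlam.le, div_mul_cancel₀ _ ha.ne', ← ENNReal.ofReal_coe_nnreal]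
        exact ENNReal.ofReal_le_ofReal (by simp)
    _ = ∫⁻ ω, ENNReal.ofReal (lam * (X ω * ξ ω)) ∂P := by
        simp_rw [ENNReal.ofReal_mul hlam.le]
        rw [lintegral_const_mul' _ _ ENNReal.ofReal_ne_top, hX_budget]
    _ ≤ ∫⁻ ω, ENNReal.ofReal (u (X ω)) ∂P :=
        lintegral_mono_ae (hX_util.mono fun ω h => ENNReal.ofReal_le_ofReal h)
    _ ≤ Vval P ξ u a := lintegral_le_Vval (hc_meas.mul hZ_meas) hX_nonneg hX_budget

theorem illposed_of_f_infinite
    {Ω : Type*} [MeasurableSpace Ω] (P : Measure Ω) [IsProbabilityMeasure P]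
    (ξ : Ω → ℝ) (hξmeas : Measurable ξ) (hξpos : ∀ᵐ ω ∂P, 0 < ξ ω)
    (u u' u'' : ℝ → ℝ) (hu_meas : Measurable u)
    (hu0 : u 0 = 0) (hu_nonneg : ∀ x : ℝ, 0 ≤ x → 0 ≤ u x)
    (hu_mono : StrictMonoOn u (Set.Ici (0:ℝ)))
    (hu_conc : StrictConcaveOn ℝ (Set.Ici (0:ℝ)) u)
    (hu_deriv : ∀ x : ℝ, 0 < x → HasDerivAt u (u' x) x)
    (hu_deriv2 : ∀ x : ℝ, 0 < x → HasDerivAt u' (u'' x) x)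
    (hu'_pos : ∀ x : ℝ, 0 < x → 0 < u' x)
    (hu'_zero : Tendsto u' (nhdsWithin 0 (Set.Ioi 0)) atTop)
    (hu'_top : Tendsto u' atTop (nhds 0))
    (I : ℝ → ℝ) (hI_meas : Measurable I) (hI_pos : ∀ y : ℝ, 0 < y → 0 < I y)
    (hI_left : ∀ x : ℝ, 0 < x → I (u' x) = x)
    (hI_right : ∀ y : ℝ, 0 < y → u' (I y) = y)
    (hinf : ∀ lam : ℝ, 0 < lam → fLag P ξ I lam = ⊤)
    :
    ∀ a : ℝ, 0 < a → Vval P ξ u a = ⊤ :=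
  illposed_of_f_infinite_general P ξ hξmeas hξpos u u' hu0 hu_conc hu_deriv I hI_meas hI_pos
    hI_right hinf
end

section
/- If liminf_{x→+∞} R(x) > 0, then for every k>1 one has limsup_{x→+∞} u'(kx)/u'(x) < 1. More precisely, if R(x) ≥ K for all x ≥ M (for some K>0, M>0), then u'(kx)/u'(x) ≤ 1/(1+K ln k) for every x ≥ M and every k>1. -/
/-!
On `[M, ∞)` the bound `R ≥ K` says
`(t ^ K * u' t)' = t ^ (K - 1) * (K * u' t + t * u'' t) ≤ 0`, so `t ^ K * u' t` is antitone
there and `u' (k * x) ≤ k ^ (-K) * u' x`.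
Finally `k ^ K = exp (K * log k) ≥ 1 + K * log k > 1`.
-/

open Filter Set

section

variable {f f' : ℝ → ℝ} {K M : ℝ} (hM : 0 < M) (hf : ∀ t, M ≤ t → HasDerivAt f (f' t) t)
  (hf' : ∀ t, M ≤ t → K * f t + t * f' t ≤ 0)
include hM hf hf'

lemma antitoneOn_rpow_mul_of_mul_deriv_le : AntitoneOn (fun t => t ^ K * f t) (Ici M) := by
  have hderiv : ∀ t, M ≤ t →
      HasDerivAt (fun t => t ^ K * f t) (t ^ (K - 1) * (K * f t + t * f' t)) t := by
    intro t ht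
    have ht0 : 0 < t := hM.trans_le ht
    have hpow : t ^ K = t ^ (K - 1) * t := by
      rw [Real.rpow_sub_one ht0.ne', div_mul_cancel₀ _ ht0.ne']
    refine ((Real.hasDerivAt_rpow_const (Or.inl ht0.ne')).mul (hf t ht)).congr_deriv ?_
    rw [hpow]
    ring
  refine antitoneOn_of_deriv_nonpos (convex_Ici M)
    (fun t ht => (hderiv t ht).continuousAt.continuousWithinAt)
    (fun t ht => ?_) (fun t ht => ?_) <;> rw [interior_Ici] at ht
  · exact (hderiv t ht.le).differentiableAt.differentiableWithinAt
  · rw [(hderiv t ht.le).deriv]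
    exact mul_nonpos_of_nonneg_of_nonpos (Real.rpow_nonneg (hM.trans ht).le _) (hf' t ht.le)

lemma rpow_mul_le_of_mul_deriv_le {k x : ℝ} (hk : 1 ≤ k) (hx : M ≤ x) :
    k ^ K * f (k * x) ≤ f x := by
  have hx0 : 0 < x := hM.trans_le hx
  have hxkx : x ≤ k * x := le_mul_of_one_le_left hx0.le hk
  have h := antitoneOn_rpow_mul_of_mul_deriv_le hM hf hf' hx (hx.trans hxkx) hxkx
  dsimp only at h
  rw [Real.mul_rpow (by linarith) hx0.le, mul_comm (k ^ K), mul_assoc] at h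
  exact le_of_mul_le_mul_left h (Real.rpow_pos_of_pos hx0 K)

end

lemma one_add_mul_log_le_rpow {k : ℝ} (hk : 0 < k) (K : ℝ) : 1 + K * Real.log k ≤ k ^ K := by
  rw [Real.rpow_def_of_pos hk]
  linarith [Real.add_one_le_exp (Real.log k * K)]

theorem risk_aversion_ratio_bound_general
    (u' u'' : ℝ → ℝ)
    (hu_deriv2 : ∀ x : ℝ, 0 < x → HasDerivAt u' (u'' x) x)
    (hu'_pos : ∀ x : ℝ, 0 < x → 0 < u' x)
    (K M : ℝ) (hK : 0 < K) (hM : 0 < M)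
    (hR : ∀ x : ℝ, M ≤ x → K ≤ -x * u'' x / u' x)
    :
    (∀ k : ℝ, 1 < k → ∀ x : ℝ, M ≤ x →
        u' (k * x) / u' x ≤ 1 / (1 + K * Real.log k)) ∧
      (∀ k : ℝ, 1 < k → Filter.limsup (fun x => u' (k * x) / u' x) Filter.atTop < 1) := by
  have hRmul : ∀ t, M ≤ t → K * u' t + t * u'' t ≤ 0 := fun t ht => by
    have := hR t ht
    rw [le_div_iff₀ (hu'_pos t (hM.trans_le ht))] at this
    linarith
  have hbound : ∀ k : ℝ, 1 < k → ∀ x : ℝ, M ≤ x →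
      u' (k * x) / u' x ≤ 1 / (1 + K * Real.log k) := by
    intro k hk x hx
    have hx0 : 0 < x := hM.trans_le hx
    have hkx0 : 0 < k * x := mul_pos (by linarith) hx0
    have hlog : 0 < 1 + K * Real.log k := by nlinarith [Real.log_pos hk]
    rw [div_le_div_iff₀ (hu'_pos x hx0) hlog, one_mul]
    calc u' (k * x) * (1 + K * Real.log k)
        ≤ u' (k * x) * k ^ K :=
          mul_le_mul_of_nonneg_left (one_add_mul_log_le_rpow (by linarith) K) (hu'_pos _ hkx0).le
      _ = k ^ K * u' (k * x) := mul_comm _ _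
      _ ≤ u' x := rpow_mul_le_of_mul_deriv_le hM (fun t ht => hu_deriv2 t (hM.trans_le ht))
          hRmul hk.le hx
  refine ⟨hbound, fun k hk => ?_⟩
  have hlt : 1 / (1 + K * Real.log k) < 1 := by
    have hKlog : 0 < K * Real.log k := mul_pos hK (Real.log_pos hk)
    rw [div_lt_one (by linarith)]
    linarith
  have hnonneg : ∀ᶠ x in atTop, 0 ≤ u' (k * x) / u' x := by
    filter_upwards [eventually_gt_atTop 0] with x hx0
    exact div_nonneg (hu'_pos _ (mul_pos (by linarith) hx0)).le (hu'_pos x hx0).le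
  refine lt_of_le_of_lt (limsup_le_of_le (isCoboundedUnder_le_of_eventually_le _ hnonneg) ?_) hlt
  filter_upwards [eventually_ge_atTop M] with x hx using hbound k hk x hx

theorem risk_aversion_ratio_bound
    (u u' u'' : ℝ → ℝ) (hu_meas : Measurable u)
    (hu0 : u 0 = 0) (hu_nonneg : ∀ x : ℝ, 0 ≤ x → 0 ≤ u x)
    (hu_mono : StrictMonoOn u (Set.Ici (0:ℝ)))
    (hu_conc : StrictConcaveOn ℝ (Set.Ici (0:ℝ)) u)
    (hu_deriv : ∀ x : ℝ, 0 < x → HasDerivAt u (u' x) x)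
    (hu_deriv2 : ∀ x : ℝ, 0 < x → HasDerivAt u' (u'' x) x)
    (hu'_pos : ∀ x : ℝ, 0 < x → 0 < u' x)
    (hu'_zero : Tendsto u' (nhdsWithin 0 (Set.Ioi 0)) atTop)
    (hu'_top : Tendsto u' atTop (nhds 0))
    (K M : ℝ) (hK : 0 < K) (hM : 0 < M)
    (hR : ∀ x : ℝ, M ≤ x → K ≤ -x * u'' x / u' x)
    :
    (∀ k : ℝ, 1 < k → ∀ x : ℝ, M ≤ x →
        u' (k * x) / u' x ≤ 1 / (1 + K * Real.log k)) ∧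
      (∀ k : ℝ, 1 < k → Filter.limsup (fun x => u' (k * x) / u' x) Filter.atTop < 1) :=
  risk_aversion_ratio_bound_general u' u'' hu_deriv2 hu'_pos K M hK hM hR
end

section
/- Suppose at least one of the following holds: (i) liminf_{x→+∞} R(x) > 0; (ii) limsup_{x→+∞} u'(kx)/u'(x) < 1 for some k>1; (iii) limsup_{x→0+} I(λx)/I(x) < +∞ for some λ∈(0,1). Then the Lagrange equation f(λ)=a admits a solution λ>0 for every a>0 if and only if λ₀<+∞; moreover, in that case λ₀=0, i.e., f(λ)<+∞ for every λ>0. -/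
/-!
Condition (i) makes `log u'(x) + K log x` decreasing, so `u'(2x) ≤ 2^(-K) u'(x)` for large `x`,
which is (ii); inverting `u'` turns (ii) into (iii), `I(c y) ≤ k I(y)` for small `y`. Concavity
gives `x u'(x) ≤ u(x) - u(0)`, i.e. `y I(y) ≤ u(I(y₀)) - u(0)` for `y ≥ y₀`; together with (iii)
this yields `I(μ y) ≤ C I(y) + M / y` for all `y > 0`, hence `f(μλ) ≤ C f(λ) + M / λ`. So
finiteness of `f` at one point propagates to every `μⁿλ` and, `f` being decreasing, to every
`λ > 0`.

Once `f` is finite everywhere, dominated convergence makes `f` continuous on `(0, ∞)` with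
`f(∞) = 0`, Fatou's lemma gives `f(0+) = ∞`, and the intermediate value theorem solves `f(λ) = a`.
-/

open MeasureTheory Filter Set
open scoped ENNReal

open Topology

section MarginalUtility

variable {u u' I : ℝ → ℝ}

theorem StrictConcaveOn.strictAntiOn_of_hasDerivAt {S : Set ℝ} (hu : StrictConcaveOn ℝ S u)
    (hu' : ∀ x ∈ S, HasDerivAt u (u' x) x) : StrictAntiOn u' S :=
  (hu.strictAntiOn_deriv fun x hx => (hu' x hx).differentiableAt).congr
    fun x hx => (hu' x hx).deriv

theorem StrictAntiOn.strictAntiOn_of_rightInvOn {α β : Type*} [LinearOrder α] [LinearOrder β]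
    {g : α → β} {f : β → α} {s : Set α} {t : Set β} (hg : StrictAntiOn g s)
    (hf : MapsTo f t s) (hgf : RightInvOn f g t) : StrictAntiOn f t := fun a ha b hb hab =>
  (hg.lt_iff_gt (hf ha) (hf hb)).1 (by rwa [hgf ha, hgf hb])

theorem mul_apply_le_sub_of_le (hu : ConcaveOn ℝ (Ici 0) u) (hu_mono : MonotoneOn u (Ici 0))
    (hu' : ∀ x, 0 < x → HasDerivAt u (u' x) x) (hI_anti : AntitoneOn I (Ioi 0))
    (hI_pos : MapsTo I (Ioi 0) (Ioi 0)) (hI_right : ∀ y, 0 < y → u' (I y) = y)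
    {y₀ y : ℝ} (hy₀ : 0 < y₀) (hy : y₀ ≤ y) : y * I y ≤ u (I y₀) - u 0 := by
  have hy_pos : 0 < y := hy₀.trans_le hy
  have hIy : 0 < I y := hI_pos hy_pos
  have hslope : u' (I y) ≤ slope u 0 (I y) :=
    hu.le_slope_of_hasDerivAt self_mem_Ici hIy.le hIy (hu' _ hIy)
  rw [slope_def_field, sub_zero, le_div_iff₀ hIy, hI_right y hy_pos] at hslope
  calc y * I y ≤ u (I y) - u 0 := hslope
    _ ≤ u (I y₀) - u 0 := by
      gcongr
      exact hu_mono hIy.le (show 0 < I y₀ from hI_pos hy₀).le (hI_anti hy₀ hy_pos hy)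

theorem AntitoneOn.tendsto_nhdsGT_zero_atTop_of_surjOn (hI_anti : AntitoneOn I (Ioi 0))
    (hI_surj : SurjOn I (Ioi 0) (Ioi 0)) : Tendsto I (𝓝[>] 0) atTop := by
  refine tendsto_atTop.2 fun b => ?_
  obtain ⟨y₁, hy₁, hIy₁⟩ := hI_surj (lt_of_lt_of_le one_pos (le_max_right b 1))
  filter_upwards [Ioc_mem_nhdsGT hy₁] with y hy
  calc b ≤ max b 1 := le_max_left b 1
    _ = I y₁ := hIy₁.symm
    _ ≤ I y := hI_anti hy.1 hy₁ hy.2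

theorem AntitoneOn.tendsto_atTop_zero_of_surjOn (hI_anti : AntitoneOn I (Ioi 0))
    (hI_pos : MapsTo I (Ioi 0) (Ioi 0)) (hI_surj : SurjOn I (Ioi 0) (Ioi 0)) :
    Tendsto I atTop (𝓝 0) := by
  refine tendsto_order.2 ⟨fun b hb => ?_, fun b hb => ?_⟩
  · filter_upwards [eventually_gt_atTop 0] with y hy
    exact hb.trans (hI_pos hy)
  · obtain ⟨y₁, hy₁, hIy₁⟩ := hI_surj (half_pos hb)
    filter_upwards [eventually_ge_atTop y₁] with y hy
    calc I y ≤ I y₁ := hI_anti hy₁ (lt_of_lt_of_le hy₁ hy) hy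
      _ < b := by rw [hIy₁]; exact half_lt_self hb

theorem AntitoneOn.continuousOn_of_surjOn (hI_anti : AntitoneOn I (Ioi 0))
    (hI_pos : MapsTo I (Ioi 0) (Ioi 0)) (hI_surj : SurjOn I (Ioi 0) (Ioi 0)) :
    ContinuousOn I (Ioi 0) := by
  intro t ht
  have himage : I '' Ioi 0 ∈ 𝓝 (I t) := by
    rw [hI_surj.image_eq_of_mapsTo hI_pos]
    exact Ioi_mem_nhds (hI_pos ht)
  exact (continuousAt_of_monotoneOn_of_image_mem_nhds (β := ℝᵒᵈ) hI_anti.dual_right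
    (Ioi_mem_nhds ht) himage).continuousWithinAt

end MarginalUtility

section GrowthConditions

variable {u' u'' I : ℝ → ℝ}

theorem eventually_div_two_mul_le_rpow_of_le_relRiskAversion {K : ℝ}
    (hu'' : ∀ x, 0 < x → HasDerivAt u' (u'' x) x) (hu'_pos : ∀ x, 0 < x → 0 < u' x)
    (hK : ∀ᶠ x in atTop, K ≤ -x * u'' x / u' x) :
    ∀ᶠ x in atTop, u' (2 * x) / u' x ≤ 2 ^ (-K) := by
  obtain ⟨x₀, hx₀⟩ := eventually_atTop.1 (hK.and (eventually_gt_atTop 0))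
  set g : ℝ → ℝ := fun z => Real.log (u' z) + K * Real.log z
  have hg : ∀ x, 0 < x → HasDerivAt g (u'' x / u' x + K * x⁻¹) x := fun x hx =>
    ((hu'' x hx).log (hu'_pos x hx).ne').add ((Real.hasDerivAt_log hx.ne').const_mul K)
  have hg_anti : AntitoneOn g (Ici x₀) := by
    refine antitoneOn_of_hasDerivWithinAt_nonpos (convex_Ici x₀)
      (fun x hx => (hg x (hx₀ x hx).2).continuousAt.continuousWithinAt)
      (fun x hx => (hg x (hx₀ x (interior_subset hx)).2).hasDerivWithinAt) fun x hx => ?_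
    obtain ⟨hKx, hx⟩ := hx₀ x (interior_subset hx)
    have hu'x := hu'_pos x hx
    rw [le_div_iff₀ hu'x] at hKx
    have hsum : u'' x / u' x + K * x⁻¹ = (x * u'' x + K * u' x) / (x * u' x) := by
      field_simp
    rw [hsum]
    exact div_nonpos_of_nonpos_of_nonneg (by linarith) (by positivity)
  filter_upwards [eventually_ge_atTop x₀] with x hx
  have hx_pos := (hx₀ x hx).2
  have hgx := hg_anti hx (hx.trans (by linarith)) (by linarith : x ≤ 2 * x)
  simp only [g, Real.log_mul two_ne_zero hx_pos.ne', mul_add] at hgx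
  rw [← Real.log_le_log_iff (div_pos (hu'_pos _ (by linarith)) (hu'_pos x hx_pos))
    (by positivity), Real.log_div (hu'_pos _ (by linarith)).ne' (hu'_pos x hx_pos).ne',
    Real.log_rpow two_pos]
  linarith

theorem pos_and_eventually_div_le_of_eventually_div_le (hu'_pos : ∀ x, 0 < x → 0 < u' x)
    (hI_anti : AntitoneOn I (Ioi 0)) (hI_left : ∀ x, 0 < x → I (u' x) = x)
    (hI_right : ∀ y, 0 < y → u' (I y) = y) (hI_top : Tendsto I (𝓝[>] 0) atTop)
    {k c : ℝ} (hk : 0 < k) (hc : ∀ᶠ x in atTop, u' (k * x) / u' x ≤ c) :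
    0 < c ∧ ∀ᶠ y in 𝓝[>] 0, I (c * y) / I y ≤ k := by
  refine ⟨?_, ?_⟩
  · obtain ⟨x, hx, hx_pos⟩ := (hc.and (eventually_gt_atTop 0)).exists
    exact (div_pos (hu'_pos _ (mul_pos hk hx_pos)) (hu'_pos x hx_pos)).trans_le hx
  filter_upwards [hI_top.eventually (hc.and (eventually_gt_atTop 0)), self_mem_nhdsWithin]
    with y ⟨hcy, hIy⟩ (hy : 0 < y)
  have hkIy : 0 < k * I y := mul_pos hk hIy
  rw [hI_right y hy, div_le_iff₀ hy] at hcy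
  rw [div_le_iff₀ hIy]
  calc I (c * y) ≤ I (u' (k * I y)) :=
        hI_anti (hu'_pos _ hkIy) ((hu'_pos _ hkIy).trans_le hcy) hcy
    _ = k * I y := hI_left _ hkIy

theorem exists_eventually_div_le_of_growth_condition
    (hu'' : ∀ x, 0 < x → HasDerivAt u' (u'' x) x) (hu'_pos : ∀ x, 0 < x → 0 < u' x)
    (hI_anti : AntitoneOn I (Ioi 0)) (hI_left : ∀ x, 0 < x → I (u' x) = x)
    (hI_right : ∀ y, 0 < y → u' (I y) = y) (hI_top : Tendsto I (𝓝[>] 0) atTop)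
    (hcond : (∃ K, 0 < K ∧ ∀ᶠ x in atTop, K ≤ -x * u'' x / u' x) ∨
      (∃ k, 1 < k ∧ ∃ c, c < 1 ∧ ∀ᶠ x in atTop, u' (k * x) / u' x ≤ c) ∨
      (∃ μ, 0 < μ ∧ μ < 1 ∧ ∃ C, ∀ᶠ y in 𝓝[>] 0, I (μ * y) / I y ≤ C)) :
    ∃ μ, 0 < μ ∧ μ < 1 ∧ ∃ C, ∀ᶠ y in 𝓝[>] 0, I (μ * y) / I y ≤ C := by
  rcases hcond with ⟨K, hK, hev⟩ | ⟨k, hk, c, hc1, hev⟩ | hiii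
  · obtain ⟨hc0, hdoub⟩ := pos_and_eventually_div_le_of_eventually_div_le hu'_pos hI_anti
      hI_left hI_right hI_top two_pos
      (eventually_div_two_mul_le_rpow_of_le_relRiskAversion hu'' hu'_pos hev)
    exact ⟨_, hc0, Real.rpow_lt_one_of_one_lt_of_neg one_lt_two (neg_neg_of_pos hK), 2, hdoub⟩
  · obtain ⟨hc0, hdoub⟩ := pos_and_eventually_div_le_of_eventually_div_le hu'_pos hI_anti
      hI_left hI_right hI_top (zero_lt_one.trans hk) hev
    exact ⟨c, hc0, hc1, k, hdoub⟩
  · exact hiii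

theorem exists_le_mul_add_div_of_eventually_div_le (hI_pos : MapsTo I (Ioi 0) (Ioi 0))
    {μ C : ℝ} (hμ : 0 < μ) (hdoub : ∀ᶠ y in 𝓝[>] 0, I (μ * y) / I y ≤ C)
    (hbdd : ∀ y₀, 0 < y₀ → ∃ M, ∀ y, y₀ ≤ y → y * I y ≤ M) :
    ∃ C' M, 0 ≤ C' ∧ ∀ y, 0 < y → I (μ * y) ≤ C' * I y + M / y := by
  obtain ⟨y₀, hy₀, hsmall⟩ := mem_nhdsGT_iff_exists_Ioo_subset.1 hdoub
  obtain ⟨M, hlarge⟩ := hbdd (μ * y₀) (mul_pos hμ hy₀)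
  refine ⟨max C 0, max (M / μ) 0, le_max_right _ _, fun y hy => ?_⟩
  have hIy : 0 < I y := hI_pos hy
  rcases lt_or_ge y y₀ with hyy₀ | hy₀y
  · have h : I (μ * y) / I y ≤ C := hsmall ⟨hy, hyy₀⟩
    rw [div_le_iff₀ hIy] at h
    calc I (μ * y) ≤ max C 0 * I y := h.trans (by gcongr; exact le_max_left _ _)
      _ ≤ _ := le_add_of_nonneg_right (by positivity)
  · have h := hlarge (μ * y) (by gcongr)
    calc I (μ * y) ≤ M / μ / y := by
          rw [div_div, le_div_iff₀ (by positivity)]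
          linarith
      _ ≤ max (M / μ) 0 / y := by gcongr; exact le_max_left _ _
      _ ≤ _ := le_add_of_nonneg_left (by positivity)

end GrowthConditions

section LagrangeFunction

variable {Ω : Type*} [MeasurableSpace Ω] {P : Measure Ω} {ξ : Ω → ℝ} {I : ℝ → ℝ}

theorem antitoneOn_ofReal_apply_mul_mul (hI_anti : AntitoneOn I (Ioi 0)) {x : ℝ} (hx : 0 < x) :
    AntitoneOn (fun lam => ENNReal.ofReal (I (lam * x) * x)) (Ioi 0) := fun _ ha _ hb hab =>
  ENNReal.ofReal_le_ofReal <| mul_le_mul_of_nonneg_right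
    (hI_anti (mul_pos ha hx) (mul_pos hb hx) (mul_le_mul_of_nonneg_right hab hx.le)) hx.le

theorem fLag_antitoneOn (hξ : ∀ᵐ ω ∂P, 0 < ξ ω) (hI_anti : AntitoneOn I (Ioi 0)) :
    AntitoneOn (fLag P ξ I) (Ioi 0) := fun _ ha _ hb hab =>
  lintegral_mono_ae <| hξ.mono fun _ hω => antitoneOn_ofReal_apply_mul_mul hI_anti hω ha hb hab

theorem fLag_mul_lt_top [IsFiniteMeasure P] (hξ : ∀ᵐ ω ∂P, 0 < ξ ω) {μ C M lam : ℝ}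
    (hC : 0 ≤ C) (hI : ∀ y, 0 < y → I (μ * y) ≤ C * I y + M / y) (hlam : 0 < lam)
    (hfin : fLag P ξ I lam < ⊤) : fLag P ξ I (μ * lam) < ⊤ := by
  have hle : fLag P ξ I (μ * lam) ≤ ∫⁻ ω, (ENNReal.ofReal C *
      ENNReal.ofReal (I (lam * ξ ω) * ξ ω) + ENNReal.ofReal (M / lam)) ∂P := by
    refine lintegral_mono_ae (hξ.mono fun ω hω => ?_)
    rw [← ENNReal.ofReal_mul hC]
    refine (ENNReal.ofReal_le_ofReal ?_).trans ENNReal.ofReal_add_le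
    calc I (μ * lam * ξ ω) * ξ ω = I (μ * (lam * ξ ω)) * ξ ω := by rw [mul_assoc]
      _ ≤ (C * I (lam * ξ ω) + M / (lam * ξ ω)) * ξ ω := by
        gcongr
        exact hI _ (mul_pos hlam hω)
      _ = C * (I (lam * ξ ω) * ξ ω) + M / lam := by field_simp
  rw [lintegral_add_right _ measurable_const, lintegral_const_mul' _ _ ENNReal.ofReal_ne_top,
    lintegral_const] at hle
  exact hle.trans_lt (ENNReal.add_lt_top.2 ⟨ENNReal.mul_lt_top ENNReal.ofReal_lt_top hfin,
    ENNReal.mul_lt_top ENNReal.ofReal_lt_top (measure_lt_top P univ)⟩)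

theorem fLag_lt_top_of_lt_top [IsFiniteMeasure P] (hξ : ∀ᵐ ω ∂P, 0 < ξ ω)
    (hI_anti : AntitoneOn I (Ioi 0)) {μ C M : ℝ} (hμ0 : 0 < μ) (hμ1 : μ < 1) (hC : 0 ≤ C)
    (hI : ∀ y, 0 < y → I (μ * y) ≤ C * I y + M / y) {lam₁ : ℝ} (hlam₁ : 0 < lam₁)
    (hfin : fLag P ξ I lam₁ < ⊤) {lam : ℝ} (hlam : 0 < lam) : fLag P ξ I lam < ⊤ := by
  have hpow : ∀ n : ℕ, fLag P ξ I (μ ^ n * lam₁) < ⊤ := by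
    intro n
    induction n with
    | zero => simpa using hfin
    | succ n ih =>
      rw [pow_succ', mul_assoc]
      exact fLag_mul_lt_top hξ hC hI (by positivity) ih
  obtain ⟨n, hn⟩ := exists_pow_lt_of_lt_one (div_pos hlam hlam₁) hμ1
  rw [lt_div_iff₀ hlam₁] at hn
  exact (fLag_antitoneOn hξ hI_anti (by positivity : 0 < μ ^ n * lam₁) hlam hn.le).trans_lt
    (hpow n)

theorem tendsto_fLag_atTop (hξ_meas : Measurable ξ) (hξ : ∀ᵐ ω ∂P, 0 < ξ ω)
    (hI_meas : Measurable I) (hI_anti : AntitoneOn I (Ioi 0)) (hI_zero : Tendsto I atTop (𝓝 0))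
    {lam₁ : ℝ} (hlam₁ : 0 < lam₁) (hfin : fLag P ξ I lam₁ < ⊤) :
    Tendsto (fLag P ξ I) atTop (𝓝 0) := by
  have h := tendsto_lintegral_filter_of_dominated_convergence (μ := P) (l := atTop)
    (F := fun lam ω => ENNReal.ofReal (I (lam * ξ ω) * ξ ω)) (f := 0)
    (fun ω => ENNReal.ofReal (I (lam₁ * ξ ω) * ξ ω)) (Eventually.of_forall fun _ => by fun_prop)
    ?_ hfin.ne ?_
  · simp only [Pi.zero_apply, lintegral_zero] at h
    exact h
  · filter_upwards [eventually_ge_atTop lam₁] with lam hlam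
    exact hξ.mono fun _ hω =>
      antitoneOn_ofReal_apply_mul_mul hI_anti hω hlam₁ (hlam₁.trans_le hlam) hlam
  · filter_upwards [hξ] with ω hω
    simpa using ENNReal.tendsto_ofReal
      ((hI_zero.comp (tendsto_id.atTop_mul_const hω)).mul_const (ξ ω))

theorem tendsto_fLag_nhdsGT_zero [NeZero P] (hξ_meas : Measurable ξ) (hξ : ∀ᵐ ω ∂P, 0 < ξ ω)
    (hI_meas : Measurable I) (hI_top : Tendsto I (𝓝[>] 0) atTop) :
    Tendsto (fLag P ξ I) (𝓝[>] 0) (𝓝 ⊤) := by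
  have hliminf : ∀ᵐ ω ∂P,
      liminf (fun lam => ENNReal.ofReal (I (lam * ξ ω) * ξ ω)) (𝓝[>] 0) = ⊤ := by
    filter_upwards [hξ] with ω hω
    have hmul : Tendsto (fun lam => lam * ξ ω) (𝓝[>] 0) (𝓝[>] 0) := by
      have h := ((continuous_mul_const (ξ ω)).continuousWithinAt (s := Ioi 0) (x := 0)
        ).tendsto_nhdsWithin (t := Ioi 0) fun lam (hlam : 0 < lam) => mul_pos hlam hω
      rwa [zero_mul] at h
    exact (ENNReal.tendsto_ofReal_atTop.comp ((hI_top.comp hmul).atTop_mul_const hω)).liminf_eq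
  have hfatou := lintegral_liminf_le (μ := P) (u := 𝓝[>] (0 : ℝ))
    (f := fun lam ω => ENNReal.ofReal (I (lam * ξ ω) * ξ ω)) fun _ => by fun_prop
  rw [lintegral_congr_ae hliminf, lintegral_const,
    ENNReal.top_mul (NeZero.ne (P univ))] at hfatou
  exact tendsto_of_le_liminf_of_limsup_le hfatou le_top

theorem continuousOn_fLag (hξ_meas : Measurable ξ) (hξ : ∀ᵐ ω ∂P, 0 < ξ ω)
    (hI_meas : Measurable I) (hI_anti : AntitoneOn I (Ioi 0)) (hI_cont : ContinuousOn I (Ioi 0))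
    (hfin : ∀ lam, 0 < lam → fLag P ξ I lam < ⊤) : ContinuousOn (fLag P ξ I) (Ioi 0) := by
  intro t (ht : 0 < t)
  refine ContinuousAt.continuousWithinAt (tendsto_lintegral_filter_of_dominated_convergence
    (fun ω => ENNReal.ofReal (I (t / 2 * ξ ω) * ξ ω)) (Eventually.of_forall fun _ => by fun_prop)
    ?_ (hfin _ (half_pos ht)).ne ?_)
  · filter_upwards [Ioi_mem_nhds (half_lt_self ht)] with lam hlam
    exact hξ.mono fun _ hω => antitoneOn_ofReal_apply_mul_mul hI_anti hω (half_pos ht)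
      ((half_pos ht).trans hlam) hlam.le
  · filter_upwards [hξ] with ω hω
    have hIt := (hI_cont.continuousAt (Ioi_mem_nhds (mul_pos ht hω))).tendsto
    exact ENNReal.tendsto_ofReal
      ((hIt.comp ((continuous_mul_const (ξ ω)).tendsto t)).mul_const (ξ ω))

end LagrangeFunction

theorem exists_pos_eq_of_continuousOn_Ioi {α : Type*} [LinearOrder α] [TopologicalSpace α]
    [OrderTopology α] {f : ℝ → α} {lo hi b : α} (hf : ContinuousOn f (Ioi 0))
    (hlo : Tendsto f atTop (𝓝 lo)) (hhi : Tendsto f (𝓝[>] 0) (𝓝 hi)) (hb : b ∈ Ioo lo hi) :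
    ∃ x, 0 < x ∧ f x = b := by
  obtain ⟨x₁, hbx₁, hx₁⟩ := ((hhi.eventually (eventually_gt_nhds hb.2)).and
    self_mem_nhdsWithin).exists
  obtain ⟨x₂, hx₂b, hx₂⟩ := ((hlo.eventually (eventually_lt_nhds hb.1)).and
    (eventually_gt_atTop 0)).exists
  exact isPreconnected_Ioi.intermediate_value hx₂ hx₁ hf ⟨hx₂b.le, hbx₁.le⟩

theorem lagrange_exists_iff_lam0_finite_general
    {Ω : Type*} [MeasurableSpace Ω] (P : Measure Ω) [IsProbabilityMeasure P]
    (ξ : Ω → ℝ) (hξmeas : Measurable ξ) (hξpos : ∀ᵐ ω ∂P, 0 < ξ ω)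
    (u u' u'' : ℝ → ℝ)
    (hu_mono : StrictMonoOn u (Set.Ici (0:ℝ)))
    (hu_conc : StrictConcaveOn ℝ (Set.Ici (0:ℝ)) u)
    (hu_deriv : ∀ x : ℝ, 0 < x → HasDerivAt u (u' x) x)
    (hu_deriv2 : ∀ x : ℝ, 0 < x → HasDerivAt u' (u'' x) x)
    (hu'_pos : ∀ x : ℝ, 0 < x → 0 < u' x)
    (I : ℝ → ℝ) (hI_meas : Measurable I) (hI_pos : ∀ y : ℝ, 0 < y → 0 < I y)
    (hI_left : ∀ x : ℝ, 0 < x → I (u' x) = x)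
    (hI_right : ∀ y : ℝ, 0 < y → u' (I y) = y)
    (hcond : (∃ K : ℝ, 0 < K ∧ ∀ᶠ x in atTop, K ≤ -x * u'' x / u' x) ∨
      (∃ k : ℝ, 1 < k ∧ ∃ c : ℝ, c < 1 ∧ ∀ᶠ x in atTop, u' (k * x) / u' x ≤ c) ∨
      (∃ lam : ℝ, 0 < lam ∧ lam < 1 ∧
        ∃ C : ℝ, ∀ᶠ x in nhdsWithin 0 (Set.Ioi 0), I (lam * x) / I x ≤ C))
    :
    ((∀ a : ℝ, 0 < a → ∃ lam : ℝ, 0 < lam ∧ fLag P ξ I lam = ENNReal.ofReal a) ↔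
        (∃ lam : ℝ, 0 < lam ∧ fLag P ξ I lam < ⊤)) ∧
      ((∃ lam : ℝ, 0 < lam ∧ fLag P ξ I lam < ⊤) →
        ∀ lam : ℝ, 0 < lam → fLag P ξ I lam < ⊤) := by
  have hI_maps : MapsTo I (Ioi 0) (Ioi 0) := fun y hy => hI_pos y hy
  have hI_surj : SurjOn I (Ioi 0) (Ioi 0) := fun x hx => ⟨u' x, hu'_pos x hx, hI_left x hx⟩
  have hI_anti : AntitoneOn I (Ioi 0) :=
    ((hu_conc.subset Ioi_subset_Ici_self (convex_Ioi 0)).strictAntiOn_of_hasDerivAt hu_deriv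
      |>.strictAntiOn_of_rightInvOn hI_maps fun y hy => hI_right y hy).antitoneOn
  have hI_top := hI_anti.tendsto_nhdsGT_zero_atTop_of_surjOn hI_surj
  obtain ⟨μ, hμ0, hμ1, C, hdoub⟩ := exists_eventually_div_le_of_growth_condition hu_deriv2
    hu'_pos hI_anti hI_left hI_right hI_top hcond
  obtain ⟨C', M, hC', hbound⟩ := exists_le_mul_add_div_of_eventually_div_le hI_maps hμ0 hdoub
    fun y₀ hy₀ => ⟨_, fun y hy => mul_apply_le_sub_of_le hu_conc.concaveOn hu_mono.monotoneOn
      hu_deriv hI_anti hI_maps hI_right hy₀ hy⟩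
  have hfin_all : (∃ lam : ℝ, 0 < lam ∧ fLag P ξ I lam < ⊤) →
      ∀ lam : ℝ, 0 < lam → fLag P ξ I lam < ⊤ := fun ⟨lam₁, hlam₁, hfin⟩ _ hlam =>
    fLag_lt_top_of_lt_top hξpos hI_anti hμ0 hμ1 hC' hbound hlam₁ hfin hlam
  refine ⟨⟨fun hsolve => ?_, fun hex a ha => ?_⟩, hfin_all⟩
  · obtain ⟨lam, hlam, heq⟩ := hsolve 1 one_pos
    exact ⟨lam, hlam, heq ▸ ENNReal.ofReal_lt_top⟩
  · obtain ⟨lam₁, hlam₁, hfin⟩ := hex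
    exact exists_pos_eq_of_continuousOn_Ioi
      (continuousOn_fLag hξmeas hξpos hI_meas hI_anti
        (hI_anti.continuousOn_of_surjOn hI_maps hI_surj) (hfin_all ⟨lam₁, hlam₁, hfin⟩))
      (tendsto_fLag_atTop hξmeas hξpos hI_meas hI_anti
        (hI_anti.tendsto_atTop_zero_of_surjOn hI_maps hI_surj) hlam₁ hfin)
      (tendsto_fLag_nhdsGT_zero hξmeas hξpos hI_meas hI_top)
      ⟨ENNReal.ofReal_pos.2 ha, ENNReal.ofReal_lt_top⟩

theorem lagrange_exists_iff_lam0_finite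
    {Ω : Type*} [MeasurableSpace Ω] (P : Measure Ω) [IsProbabilityMeasure P]
    (ξ : Ω → ℝ) (hξmeas : Measurable ξ) (hξpos : ∀ᵐ ω ∂P, 0 < ξ ω)
    (u u' u'' : ℝ → ℝ) (hu_meas : Measurable u)
    (hu0 : u 0 = 0) (hu_nonneg : ∀ x : ℝ, 0 ≤ x → 0 ≤ u x)
    (hu_mono : StrictMonoOn u (Set.Ici (0:ℝ)))
    (hu_conc : StrictConcaveOn ℝ (Set.Ici (0:ℝ)) u)
    (hu_deriv : ∀ x : ℝ, 0 < x → HasDerivAt u (u' x) x)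
    (hu_deriv2 : ∀ x : ℝ, 0 < x → HasDerivAt u' (u'' x) x)
    (hu'_pos : ∀ x : ℝ, 0 < x → 0 < u' x)
    (hu'_zero : Tendsto u' (nhdsWithin 0 (Set.Ioi 0)) atTop)
    (hu'_top : Tendsto u' atTop (nhds 0))
    (I : ℝ → ℝ) (hI_meas : Measurable I) (hI_pos : ∀ y : ℝ, 0 < y → 0 < I y)
    (hI_left : ∀ x : ℝ, 0 < x → I (u' x) = x)
    (hI_right : ∀ y : ℝ, 0 < y → u' (I y) = y)
    (hcond : (∃ K : ℝ, 0 < K ∧ ∀ᶠ x in atTop, K ≤ -x * u'' x / u' x) ∨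
      (∃ k : ℝ, 1 < k ∧ ∃ c : ℝ, c < 1 ∧ ∀ᶠ x in atTop, u' (k * x) / u' x ≤ c) ∨
      (∃ lam : ℝ, 0 < lam ∧ lam < 1 ∧
        ∃ C : ℝ, ∀ᶠ x in nhdsWithin 0 (Set.Ioi 0), I (lam * x) / I x ≤ C))
    :
    ((∀ a : ℝ, 0 < a → ∃ lam : ℝ, 0 < lam ∧ fLag P ξ I lam = ENNReal.ofReal a) ↔
        (∃ lam : ℝ, 0 < lam ∧ fLag P ξ I lam < ⊤)) ∧
      ((∃ lam : ℝ, 0 < lam ∧ fLag P ξ I lam < ⊤) →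
        ∀ lam : ℝ, 0 < lam → fLag P ξ I lam < ⊤) :=
  lagrange_exists_iff_lam0_finite_general P ξ hξmeas hξpos u u' u'' hu_mono hu_conc hu_deriv
    hu_deriv2 hu'_pos I hI_meas hI_pos hI_left hI_right hcond
end
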